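/- arXiv:1910.05379 — 4 statements merged into one kernel-verified Lean document; each statement's English description precedes it below -/
import Mathlib

section
/- Let 1 ≤ d ≤ n and b ≥ 1 be integers, and define the level set L^{s(b)}_{n,d} := {ℓ ∈ ℕ₀^d : ℓ_t ≥ 1 for all t and ‖ℓ‖₁ ≤ n} ∪ {ℓ ∈ ℕ₀^d : ℓ_t = 0 for some t and ∑_t max(ℓ_t,1) ≤ n − b + 1} ∪ {0}. Then ∑_{ℓ ∈ L^{s(b)}_{n,d}} ∏_{t=1}^d c(ℓ_t) = Å(n,d) + ∑_{q=1}^d 2^q · C(d,q) · Å(n − q − b + 1, d − q), where c(0) := 2 and c(λ) := 2^{λ−1} for λ ≥ 1, and C(d,q) is the binomial coefficient. (Proposition 2.10, number of regular sparse grid points with coarse boundary.) -/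
/-- The interior regular sparse grid size `Å(m, e)`: `Å(m, 0) = 1` for every integer `m`,
and for `e ≥ 1`, `Å(m, e) = ∑_{ℓ ∈ ℕ^e, ℓ_t ≥ 1, ‖ℓ‖₁ ≤ m} 2^(‖ℓ‖₁ − e)`. -/
def interiorSize (m : ℤ) (e : ℕ) : ℕ :=
  if e = 0 then 1
  else ∑ ℓ ∈ (Fintype.piFinset fun _ : Fin e => Finset.range (m.toNat + 1)).filter
      (fun ℓ => (∀ t, 1 ≤ ℓ t) ∧ (∑ t, (ℓ t : ℤ)) ≤ m),
    2 ^ ((∑ t, ℓ t) - e)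

lemma interiorSize_eq_sum {ι : Type*} [Fintype ι] [DecidableEq ι] (m : ℤ) {e : ℕ} (he : e ≠ 0)
    (hcard : Fintype.card ι = e) (N : ℕ) (hN : m.toNat ≤ N) :
    interiorSize m e
      = ∑ ℓ ∈ (Fintype.piFinset fun _ : ι => Finset.range (N + 1)).filter
          (fun ℓ => (∀ t, 1 ≤ ℓ t) ∧ (∑ t, (ℓ t : ℤ)) ≤ m),
        2 ^ ((∑ t, ℓ t) - e) := by
  classical
  unfold interiorSize
  rw [if_neg he]
  have σ : ι ≃ Fin e := Fintype.equivFinOfCardEq hcard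
  refine Finset.sum_nbij' (fun ℓ => ℓ ∘ σ) (fun ℓ' => ℓ' ∘ σ.symm) ?_ ?_ ?_ ?_ ?_
  · intro a ha
    simp only [Finset.mem_filter, Fintype.mem_piFinset, Finset.mem_range] at ha ⊢
    obtain ⟨hpi, h1, h2⟩ := ha
    refine ⟨fun t => ?_, fun t => ?_, ?_⟩
    · simp only [Function.comp_apply]; have := hpi (σ t); omega
    · simp only [Function.comp_apply]; exact h1 (σ t)
    · simp only [Function.comp_apply]
      rw [Equiv.sum_comp σ (fun j => (a j : ℤ))]; exact h2
  · intro a ha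
    simp only [Finset.mem_filter, Fintype.mem_piFinset, Finset.mem_range] at ha ⊢
    obtain ⟨hpi, h1, h2⟩ := ha
    have hbound : ∀ t : ι, a t ≤ m.toNat := by
      intro t
      have hm : (0:ℤ) ≤ m := le_trans (Finset.sum_nonneg fun i _ => by positivity) h2
      have : (a t : ℤ) ≤ ∑ s, (a s : ℤ) :=
        Finset.single_le_sum (f := fun s => (a s : ℤ)) (fun i _ => by positivity)
          (Finset.mem_univ t)
      exact (Int.le_toNat hm).mpr (le_trans this h2)
    refine ⟨fun t => ?_, fun t => ?_, ?_⟩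
    · simp only [Function.comp_apply]; have := hbound (σ.symm t); omega
    · simp only [Function.comp_apply]; exact h1 (σ.symm t)
    · simp only [Function.comp_apply]
      rw [Equiv.sum_comp σ.symm (fun j => (a j : ℤ))]; exact h2
  · intro a _; funext t; simp
  · intro a _; funext t; simp
  · intro a _
    congr 1
    simp only [Function.comp_apply]
    rw [Equiv.sum_comp σ (fun j => a j)]

lemma fiber_empty (n d b : ℕ) (hd : 1 ≤ d) :
    ∑ ℓ ∈ ((Fintype.piFinset fun _ : Fin d => Finset.range (n + 1)).filter
        (fun ℓ => ((∀ t, 1 ≤ ℓ t) ∧ (∑ t, ℓ t) ≤ n)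
          ∨ ((∃ t, ℓ t = 0) ∧ (∑ t, ((max (ℓ t) 1 : ℕ) : ℤ)) ≤ (n : ℤ) - b + 1)
          ∨ ℓ = 0)).filter (fun ℓ => Finset.univ.filter (fun t => ℓ t = 0) = ∅),
      ∏ t, (if ℓ t = 0 then 2 else 2 ^ (ℓ t - 1))
    = interiorSize (n : ℤ) d := by
  classical
  rw [interiorSize_eq_sum (n : ℤ) (by omega) (Fintype.card_fin d) n (by simp)]
  apply Finset.sum_congr
  · ext ℓ
    simp only [Finset.mem_filter, Fintype.mem_piFinset, Finset.mem_range]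
    constructor
    · rintro ⟨⟨hpi, hcond⟩, hz⟩
      have h1 : ∀ t, 1 ≤ ℓ t := by
        intro t
        have := Finset.ext_iff.mp hz t
        simp only [Finset.mem_filter, Finset.mem_univ, true_and,
          Finset.notMem_empty, iff_false] at this
        omega
      refine ⟨hpi, h1, ?_⟩
      rcases hcond with ⟨_, hs⟩ | ⟨⟨t, ht⟩, _⟩ | h0
      · exact_mod_cast hs
      · have := h1 t; omega
      · exfalso
        have h2 := h1 ⟨0, hd⟩
        rw [h0] at h2
        simp at h2
    · rintro ⟨hpi, h1, hs⟩
      refine ⟨⟨hpi, Or.inl ⟨h1, by exact_mod_cast hs⟩⟩, ?_⟩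
      rw [Finset.filter_eq_empty_iff]
      intro t _
      have := h1 t; omega
  · intro ℓ hℓ
    simp only [Finset.mem_filter] at hℓ
    obtain ⟨_, h1, _⟩ := hℓ
    have hne : ∀ t, ℓ t ≠ 0 := fun t => Nat.one_le_iff_ne_zero.mp (h1 t)
    have heq : ∏ t, (if ℓ t = 0 then 2 else 2 ^ (ℓ t - 1)) = ∏ t, 2 ^ (ℓ t - 1) :=
      Finset.prod_congr rfl fun t _ => if_neg (hne t)
    rw [heq, Finset.prod_pow_eq_pow_sum]
    congr 1
    have hsum : ∑ t, (ℓ t - 1 + 1) = ∑ t, ℓ t :=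
      Finset.sum_congr rfl fun t _ => by have := h1 t; omega
    rw [Finset.sum_add_distrib] at hsum
    simp only [Finset.sum_const, Finset.card_univ, Fintype.card_fin, smul_eq_mul,
      mul_one] at hsum
    omega

lemma fiber_sum (n d b : ℕ) (hd : 1 ≤ d) (hb : 1 ≤ b)
    (S : Finset (Fin d)) (hS : S.Nonempty) :
    ∑ ℓ ∈ ((Fintype.piFinset fun _ : Fin d => Finset.range (n + 1)).filter
        (fun ℓ => ((∀ t, 1 ≤ ℓ t) ∧ (∑ t, ℓ t) ≤ n)
          ∨ ((∃ t, ℓ t = 0) ∧ (∑ t, ((max (ℓ t) 1 : ℕ) : ℤ)) ≤ (n : ℤ) - b + 1)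
          ∨ ℓ = 0)).filter (fun ℓ => Finset.univ.filter (fun t => ℓ t = 0) = S),
      ∏ t, (if ℓ t = 0 then 2 else 2 ^ (ℓ t - 1))
    = 2 ^ S.card * interiorSize ((n : ℤ) - S.card - b + 1) (d - S.card) := by
  classical
  by_cases hU : S = Finset.univ
  · subst hU
    have hsingle : ((Fintype.piFinset fun _ : Fin d => Finset.range (n + 1)).filter
        (fun ℓ => ((∀ t, 1 ≤ ℓ t) ∧ (∑ t, ℓ t) ≤ n)
          ∨ ((∃ t, ℓ t = 0) ∧ (∑ t, ((max (ℓ t) 1 : ℕ) : ℤ)) ≤ (n : ℤ) - b + 1)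
          ∨ ℓ = 0)).filter
          (fun ℓ => Finset.univ.filter (fun t => ℓ t = 0) = Finset.univ)
        = {(0 : Fin d → ℕ)} := by
      ext ℓ
      simp only [Finset.mem_filter, Fintype.mem_piFinset, Finset.mem_range,
        Finset.mem_singleton]
      constructor
      · rintro ⟨-, hz⟩
        funext t
        have := Finset.ext_iff.mp hz t
        simp only [Finset.mem_filter, Finset.mem_univ, true_and, iff_true] at this
        simpa using this
      · rintro rfl
        refine ⟨⟨fun t => by simp, Or.inr (Or.inr rfl)⟩, ?_⟩
        simp
    rw [hsingle, Finset.sum_singleton]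
    simp only [Pi.zero_apply, if_pos rfl, Finset.prod_const, Finset.card_univ,
      Fintype.card_fin, Nat.sub_self]
    simp [interiorSize]
  · -- S ≠ univ
    have hq1 : 1 ≤ S.card := Finset.card_pos.mpr hS
    have hqd : S.card < d := by
      simpa using Finset.card_lt_card (Finset.ssubset_univ_iff.mpr hU)
    have hcard : Fintype.card {t // t ∈ (Sᶜ : Finset (Fin d))} = d - S.card := by
      rw [Fintype.card_coe, Finset.card_compl, Fintype.card_fin]
    have hN : ((n : ℤ) - S.card - b + 1).toNat ≤ n := Int.toNat_le.mpr (by push_cast; omega)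
    rw [interiorSize_eq_sum ((n : ℤ) - S.card - b + 1) (by omega) hcard n hN, Finset.mul_sum]
    refine Finset.sum_nbij' (fun ℓ => fun t : {t // t ∈ (Sᶜ : Finset (Fin d))} => ℓ ↑t)
      (fun ℓ' => fun t : Fin d => if h : t ∈ (Sᶜ : Finset (Fin d)) then ℓ' ⟨t, h⟩ else 0)
      ?_ ?_ ?_ ?_ ?_
    · -- forward membership
      intro a ha
      simp only [Finset.mem_filter, Fintype.mem_piFinset, Finset.mem_range] at ha ⊢
      obtain ⟨⟨hpi, hcond⟩, hz⟩ := ha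
      have hzS : ∀ t, a t = 0 ↔ t ∈ S := by
        intro t
        have := Finset.ext_iff.mp hz t
        simpa using this
      have h1c : ∀ t : {t // t ∈ (Sᶜ : Finset (Fin d))}, 1 ≤ a ↑t := by
        intro t
        have ht : (↑t : Fin d) ∉ S := Finset.mem_compl.mp t.2
        have hne : a ↑t ≠ 0 := fun h0 => ht ((hzS ↑t).mp h0)
        omega
      have hB : (∑ t, ((max (a t) 1 : ℕ) : ℤ)) ≤ (n : ℤ) - b + 1 := by
        rcases hcond with ⟨h1, -⟩ | ⟨-, hB⟩ | h0
        · obtain ⟨t0, ht0⟩ := hS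
          have := (hzS t0).mpr ht0
          have := h1 t0
          omega
        · exact hB
        · exfalso
          apply hU
          apply Finset.eq_univ_iff_forall.mpr
          intro t
          exact (hzS t).mp (by rw [h0]; rfl)
      rw [← Finset.sum_add_sum_compl S (fun t => ((max (a t) 1 : ℕ) : ℤ))] at hB
      have e1 : (∑ t ∈ S, ((max (a t) 1 : ℕ) : ℤ)) = (S.card : ℤ) := by
        have hterm : ∀ t ∈ S, ((max (a t) 1 : ℕ) : ℤ) = 1 := by
          intro t ht
          rw [(hzS t).mpr ht]
          simp
        rw [Finset.sum_congr rfl hterm]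
        simp
      have e2 : (∑ t ∈ Sᶜ, ((max (a t) 1 : ℕ) : ℤ)) = ∑ t ∈ Sᶜ, ((a t : ℤ)) := by
        refine Finset.sum_congr rfl fun t ht => ?_
        have h1 : 1 ≤ a t := h1c ⟨t, ht⟩
        rw [max_eq_left h1]
      refine ⟨fun t => hpi ↑t, h1c, ?_⟩
      rw [Finset.sum_coe_sort Sᶜ (fun t => ((a t : ℤ)))]
      rw [e1, e2] at hB
      linarith
    · -- backward membership
      intro a ha
      simp only [Finset.mem_filter, Fintype.mem_piFinset, Finset.mem_range] at ha ⊢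
      obtain ⟨hpi, h1, hsum⟩ := ha
      have hg0 : ∀ t ∈ S, (if h : t ∈ (Sᶜ : Finset (Fin d)) then a ⟨t, h⟩ else 0) = 0 := by
        intro t ht
        rw [dif_neg (by simp [ht])]
      refine ⟨⟨?_, ?_⟩, ?_⟩
      · intro t
        by_cases ht : t ∈ (Sᶜ : Finset (Fin d))
        · rw [dif_pos ht]
          exact hpi ⟨t, ht⟩
        · rw [dif_neg ht]
          omega
      · refine Or.inr (Or.inl ⟨?_, ?_⟩)
        · obtain ⟨t0, ht0⟩ := hS
          exact ⟨t0, hg0 t0 ht0⟩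
        · rw [← Finset.sum_add_sum_compl S
            (fun t => ((max (if h : t ∈ (Sᶜ : Finset (Fin d)) then a ⟨t, h⟩ else 0) 1 : ℕ) : ℤ))]
          have e1 : ∀ t ∈ S,
              ((max (if h : t ∈ (Sᶜ : Finset (Fin d)) then a ⟨t, h⟩ else 0) 1 : ℕ) : ℤ) = 1 := by
            intro t ht
            rw [hg0 t ht]
            simp
          have e2 : (∑ t ∈ Sᶜ,
              ((max (if h : t ∈ (Sᶜ : Finset (Fin d)) then a ⟨t, h⟩ else 0) 1 : ℕ) : ℤ))
              = ∑ t : {t // t ∈ (Sᶜ : Finset (Fin d))}, ((a t : ℤ)) := by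
            rw [← Finset.sum_coe_sort Sᶜ
              (fun t => ((max (if h : t ∈ (Sᶜ : Finset (Fin d)) then a ⟨t, h⟩ else 0) 1 : ℕ) : ℤ))]
            refine Finset.sum_congr rfl fun t _ => ?_
            rw [dif_pos t.2, Subtype.coe_eta, max_eq_left (h1 t)]
          rw [Finset.sum_congr rfl e1, e2]
          simp only [Finset.sum_const, nsmul_eq_mul, mul_one]
          linarith
      · ext t
        simp only [Finset.mem_filter, Finset.mem_univ, true_and]
        constructor
        · intro h0
          by_contra ht
          have htc : t ∈ (Sᶜ : Finset (Fin d)) := Finset.mem_compl.mpr ht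
          rw [dif_pos htc] at h0
          have := h1 ⟨t, htc⟩
          omega
        · exact hg0 t
    · -- left inverse
      intro a ha
      simp only [Finset.mem_filter] at ha
      obtain ⟨-, hz⟩ := ha
      have hzS : ∀ t, a t = 0 ↔ t ∈ S := by
        intro t
        have := Finset.ext_iff.mp hz t
        simpa using this
      funext t
      by_cases ht : t ∈ (Sᶜ : Finset (Fin d))
      · simp [ht]
      · simp only [ht, dif_neg, not_false_iff]
        have : t ∈ S := by simpa using ht
        exact ((hzS t).mpr this).symm
    · -- right inverse
      intro a _
      funext t
      simp [t.2]
    · -- weights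
      intro a ha
      simp only [Finset.mem_filter] at ha
      obtain ⟨-, hz⟩ := ha
      have hzS : ∀ t, a t = 0 ↔ t ∈ S := by
        intro t
        have := Finset.ext_iff.mp hz t
        simpa using this
      have h1 : ∀ t ∈ (Sᶜ : Finset (Fin d)), 1 ≤ a t := by
        intro t ht
        have ht' : t ∉ S := Finset.mem_compl.mp ht
        have hne : a t ≠ 0 := fun h0 => ht' ((hzS t).mp h0)
        omega
      rw [← Finset.prod_mul_prod_compl S (fun t => if a t = 0 then 2 else 2 ^ (a t - 1))]
      have e1 : (∏ t ∈ S, (if a t = 0 then 2 else 2 ^ (a t - 1))) = 2 ^ S.card := by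
        have hterm : ∀ t ∈ S, (if a t = 0 then 2 else 2 ^ (a t - 1)) = 2 :=
          fun t ht => if_pos ((hzS t).mpr ht)
        rw [Finset.prod_congr rfl hterm, Finset.prod_const]
      have e2 : (∏ t ∈ Sᶜ, (if a t = 0 then 2 else 2 ^ (a t - 1)))
          = 2 ^ (∑ t ∈ Sᶜ, (a t - 1)) := by
        have hterm : ∀ t ∈ (Sᶜ : Finset (Fin d)),
            (if a t = 0 then 2 else 2 ^ (a t - 1)) = 2 ^ (a t - 1) := by
          intro t ht
          exact if_neg (fun h0 => (Finset.mem_compl.mp ht) ((hzS t).mp h0))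
        rw [Finset.prod_congr rfl hterm, Finset.prod_pow_eq_pow_sum]
      rw [e1, e2]
      have hsum : ∑ t ∈ Sᶜ, (a t - 1 + 1) = ∑ t ∈ Sᶜ, a t :=
        Finset.sum_congr rfl fun t ht => by have := h1 t ht; omega
      rw [Finset.sum_add_distrib] at hsum
      simp only [Finset.sum_const, smul_eq_mul, mul_one] at hsum
      have hcc : (Sᶜ : Finset (Fin d)).card = d - S.card := by
        rw [Finset.card_compl, Fintype.card_fin]
      have hexp : ∑ t ∈ Sᶜ, (a t - 1)
          = (∑ t : {t // t ∈ (Sᶜ : Finset (Fin d))}, a ↑t) - (d - S.card) := by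
        rw [Finset.sum_coe_sort Sᶜ (fun t => a t)]
        omega
      rw [hexp]

/-- **Proposition 2.10 (number of regular sparse grid points with coarse boundary).** -/
theorem sparse_grid_size_coarse_boundary
    (n d b : ℕ) (hd : 1 ≤ d) (hdn : d ≤ n) (hb : 1 ≤ b) :
    ∑ ℓ ∈ (Fintype.piFinset fun _ : Fin d => Finset.range (n + 1)).filter
        (fun ℓ =>
          ((∀ t, 1 ≤ ℓ t) ∧ (∑ t, ℓ t) ≤ n)
          ∨ ((∃ t, ℓ t = 0) ∧ (∑ t, ((max (ℓ t) 1 : ℕ) : ℤ)) ≤ (n : ℤ) - b + 1)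
          ∨ ℓ = 0),
      ∏ t, (if ℓ t = 0 then 2 else 2 ^ (ℓ t - 1))
    = interiorSize (n : ℤ) d
      + ∑ q ∈ Finset.Icc 1 d,
          2 ^ q * d.choose q * interiorSize ((n : ℤ) - q - b + 1) (d - q) := by
  classical
  rw [← Finset.sum_fiberwise_of_maps_to
      (g := fun ℓ : Fin d → ℕ => Finset.univ.filter fun t => ℓ t = 0)
      (t := (Finset.univ : Finset (Fin d)).powerset)
      (fun x _ => Finset.mem_powerset.mpr (Finset.filter_subset _ _))]
  rw [Finset.sum_powerset]
  rw [Finset.card_univ, Fintype.card_fin]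
  have hrange : Finset.range (d + 1) = insert 0 (Finset.Icc 1 d) := by
    ext x
    simp only [Finset.mem_range, Finset.mem_insert, Finset.mem_Icc]
    omega
  rw [hrange, Finset.sum_insert (by simp)]
  congr 1
  · rw [Finset.powersetCard_zero, Finset.sum_singleton]
    exact fiber_empty n d b hd
  · refine Finset.sum_congr rfl fun q hq => ?_
    simp only [Finset.mem_Icc] at hq
    have hval : ∀ S ∈ Finset.powersetCard q (Finset.univ : Finset (Fin d)),
        (∑ ℓ ∈ ((Fintype.piFinset fun _ : Fin d => Finset.range (n + 1)).filter
          (fun ℓ => ((∀ t, 1 ≤ ℓ t) ∧ (∑ t, ℓ t) ≤ n)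
            ∨ ((∃ t, ℓ t = 0) ∧ (∑ t, ((max (ℓ t) 1 : ℕ) : ℤ)) ≤ (n : ℤ) - b + 1)
            ∨ ℓ = 0)).filter (fun ℓ => Finset.univ.filter (fun t => ℓ t = 0) = S),
          ∏ t, (if ℓ t = 0 then 2 else 2 ^ (ℓ t - 1)))
        = 2 ^ q * interiorSize ((n : ℤ) - q - b + 1) (d - q) := by
      intro S hSq
      have hcard : S.card = q := Finset.mem_powersetCard_univ.mp hSq
      have hS : S.Nonempty := Finset.card_pos.mp (by omega)
      rw [fiber_sum n d b hd hb S hS, hcard]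
    rw [Finset.sum_congr rfl hval, Finset.sum_const, Finset.card_powersetCard,
      Finset.card_univ, Fintype.card_fin, smul_eq_mul]
    ring
end

section
/- Let p be an odd positive integer and ℓ ∈ ℕ₀. Then the hierarchical B-splines φ^p_{ℓ',i'} with 0 ≤ ℓ' ≤ ℓ and i' ∈ I_{ℓ'} are linearly independent as functions [0,1] → ℝ. (Proposition 3.5, hierarchical B-splines are linearly independent.) -/
/-- The hierarchical index set: `I_0 = {0,1}`, and for `ℓ ≥ 1` the odd indices in
`{1, …, 2^ℓ − 1}`. -/
def hierIndex (lam : ℕ) : Finset ℕ :=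
  if lam = 0 then ({0, 1} : Finset ℕ)
  else (Finset.range (2 ^ lam)).filter fun j => Odd j

/-- The cardinal B-spline of degree `p`: `b⁰ = χ_{[0,1)}` and
`bᵖ(x) = ∫_0^1 b^{p−1}(x − y) dy`. -/
noncomputable def cardinalBSpline : ℕ → ℝ → ℝ
  | 0 => (Set.Ico (0:ℝ) 1).indicator 1
  | p + 1 => fun x => ∫ y in (0:ℝ)..(1:ℝ), cardinalBSpline p (x - y)

/-- The hierarchical B-spline `φᵖ_{ℓ,i}(x) = bᵖ(2^ℓ x + (p+1)/2 − i)` on `[0,1]`. -/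
noncomputable def hierBSpline (p lam i : ℕ) : Set.Icc (0:ℝ) 1 → ℝ :=
  fun x => cardinalBSpline p ((2:ℝ) ^ lam * (x : ℝ) + ((p : ℝ) + 1) / 2 - (i : ℝ))

namespace HB

/-- truncated power -/
noncomputable def tp (q : ℕ) (u : ℝ) : ℝ := (max u 0) ^ q

lemma tp_of_nonneg {u : ℝ} (h : 0 ≤ u) (q : ℕ) : tp q u = u ^ q := by
  simp [tp, max_eq_left h]

lemma tp_of_nonpos {u : ℝ} (h : u ≤ 0) {q : ℕ} (hq : q ≠ 0) : tp q u = 0 := by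
  simp [tp, max_eq_right h, zero_pow hq]

lemma tp_continuous (q : ℕ) : Continuous (tp q) := by
  exact (continuous_id.max continuous_const).pow q

lemma tp_abs_le (q : ℕ) (u : ℝ) : |tp q u| ≤ |u| ^ q := by
  rcases le_or_gt u 0 with h | h
  · rw [tp, max_eq_right h]
    rcases Nat.eq_zero_or_pos q with rfl | hq
    · simp
    · rw [zero_pow (by omega)]
      simp only [abs_zero]
      positivity
  · rw [tp, max_eq_left h.le, abs_pow]

lemma tp_hasDerivAt (q : ℕ) (hq : q ≠ 0) (u : ℝ) :
    HasDerivAt (tp (q + 1)) ((q + 1 : ℝ) * tp q u) u := by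
  rcases lt_trichotomy u 0 with h | h | h
  · have heq : tp (q+1) =ᶠ[nhds u] (fun _ : ℝ => (0:ℝ)) := by
      filter_upwards [eventually_lt_nhds h] with v hv
      exact tp_of_nonpos hv.le (by omega)
    rw [tp_of_nonpos h.le hq, mul_zero]
    exact (hasDerivAt_const u (0:ℝ)).congr_of_eventuallyEq heq
  · subst h
    rw [tp_of_nonpos le_rfl hq, mul_zero]
    rw [hasDerivAt_iff_tendsto_slope]
    have hb : ∀ v : ℝ, ‖slope (tp (q+1)) 0 v‖ ≤ |v| ^ q := by
      intro v
      rw [slope_def_field, tp_of_nonpos le_rfl (by omega), sub_zero, sub_zero, div_eq_mul_inv]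
      calc ‖tp (q+1) v * v⁻¹‖ ≤ |v|^(q+1) * |v|⁻¹ := by
            rw [norm_mul, norm_inv, Real.norm_eq_abs, Real.norm_eq_abs]
            exact mul_le_mul_of_nonneg_right (tp_abs_le _ _) (inv_nonneg.2 (abs_nonneg _))
        _ ≤ |v| ^ q := by
            rcases eq_or_ne v 0 with rfl | hv
            · simp [zero_pow hq]
            · rw [pow_succ, mul_assoc, mul_inv_cancel₀ (by simpa using hv), mul_one]
    apply squeeze_zero_norm hb
    have h1 : Filter.Tendsto (fun v : ℝ => |v| ^ q) (nhds 0) (nhds 0) := by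
      have hc : Continuous (fun v : ℝ => |v| ^ q) := continuous_abs.pow q
      simpa [zero_pow hq] using hc.tendsto (0:ℝ)
    exact h1.mono_left nhdsWithin_le_nhds
  · have heq : tp (q+1) =ᶠ[nhds u] (fun v : ℝ => v ^ (q+1)) := by
      filter_upwards [eventually_gt_nhds h] with v hv
      exact tp_of_nonneg hv.le (q+1)
    rw [tp_of_nonneg h.le]
    have h2 : HasDerivAt (fun v : ℝ => v ^ (q+1)) ((q+1 : ℝ) * u ^ q) u := by
      simpa using hasDerivAt_pow (q+1) u
    exact h2.congr_of_eventuallyEq heq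

/-- integral of a shifted truncated power over `y ∈ [0,1]` -/
lemma tp_integral (q : ℕ) (hq : q ≠ 0) (z : ℝ) :
    ∫ y in (0:ℝ)..1, tp q (z - y) = (tp (q+1) z - tp (q+1) (z - 1)) / (q + 1) := by
  have key : ∫ y in (0:ℝ)..1, (q+1:ℝ) * tp q (z - y)
      = -tp (q + 1) (z - 1) - -tp (q + 1) (z - 0) := by
    apply intervalIntegral.integral_eq_sub_of_hasDerivAt
      (f := fun y => - tp (q+1) (z - y))
    · intro x _
      have h1 : HasDerivAt (fun y : ℝ => z - y) (-1) x := by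
        simpa using ((hasDerivAt_id x).const_sub z)
      have h2 := ((tp_hasDerivAt q hq (z - x)).comp x h1).neg
      convert h2 using 1
      · rfl
      · ring
    · apply Continuous.intervalIntegrable
      exact continuous_const.mul ((tp_continuous q).comp (continuous_const.sub continuous_id))
  rw [intervalIntegral.integral_const_mul] at key
  have hq1 : (q + 1 : ℝ) ≠ 0 := by positivity
  rw [eq_div_iff hq1, mul_comm]
  rw [key]
  ring

lemma bspline_one (x : ℝ) :
    cardinalBSpline 1 x = max x 0 - 2 * max (x-1) 0 + max (x-2) 0 := by
  show (∫ y in (0:ℝ)..(1:ℝ), cardinalBSpline 0 (x - y)) = _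
  have h1 : ∀ y : ℝ, cardinalBSpline 0 (x - y)
      = (Set.Ioc (x-1) x).indicator (fun _ => (1:ℝ)) y := by
    intro y
    show (Set.Ico (0:ℝ) 1).indicator 1 (x - y) = _
    by_cases h : x - y ∈ Set.Ico (0:ℝ) 1
    · rw [Set.indicator_of_mem h, Set.indicator_of_mem]
      · rfl
      · obtain ⟨ha, hb⟩ := h
        exact ⟨by linarith, by linarith⟩
    · rw [Set.indicator_of_notMem h, Set.indicator_of_notMem]
      intro hy
      obtain ⟨ha, hb⟩ := hy
      exact h ⟨by linarith, by linarith⟩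
  simp only [h1]
  rw [intervalIntegral.integral_of_le (by norm_num : (0:ℝ) ≤ 1)]
  rw [MeasureTheory.setIntegral_indicator measurableSet_Ioc]
  rw [MeasureTheory.setIntegral_const, smul_eq_mul, mul_one]
  have h2 : Set.Ioc (0:ℝ) 1 ∩ Set.Ioc (x-1) x = Set.Ioc (max 0 (x-1)) (min 1 x) := by
    rw [Set.Ioc_inter_Ioc]
  rw [h2, Real.volume_real_Ioc]
  simp only [max_def, min_def]
  split_ifs <;> linarith

lemma pascal_step (n : ℕ) (A : ℕ → ℝ) :
    ∑ k ∈ Finset.range (n+2), (-1:ℝ)^k * ((n+1).choose k) * (A k - A (k+1))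
      = ∑ k ∈ Finset.range (n+3), (-1:ℝ)^k * ((n+2).choose k) * A k := by
  have hsplit : ∑ k ∈ Finset.range (n+2), (-1:ℝ)^k * ((n+1).choose k) * (A k - A (k+1))
      = (∑ k ∈ Finset.range (n+2), (-1:ℝ)^k * ((n+1).choose k) * A k)
        - ∑ k ∈ Finset.range (n+2), (-1:ℝ)^k * ((n+1).choose k) * A (k+1) := by
    rw [← Finset.sum_sub_distrib]
    exact Finset.sum_congr rfl fun k _ => by ring
  rw [hsplit]
  have h1 : ∑ k ∈ Finset.range (n+2), (-1:ℝ)^k * ((n+1).choose k) * A k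
      = ∑ k ∈ Finset.range (n+3), (-1:ℝ)^k * ((n+1).choose k) * A k := by
    rw [Finset.sum_range_succ (n := n+2)]
    rw [Nat.choose_eq_zero_of_lt (by omega)]
    simp
  set g : ℕ → ℝ := fun j => match j with
    | 0 => 0
    | (j+1) => (-1:ℝ)^j * ((n+1).choose j) * A (j+1) with hg
  have h2 : ∑ k ∈ Finset.range (n+2), (-1:ℝ)^k * ((n+1).choose k) * A (k+1)
      = ∑ j ∈ Finset.range (n+3), g j := by
    rw [Finset.sum_range_succ' g (n+2)]
    simp only [hg]
    rw [add_zero]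
  rw [h1, h2, ← Finset.sum_sub_distrib]
  apply Finset.sum_congr rfl
  intro k _
  match k with
  | 0 => simp [hg]
  | (j+1) =>
    simp only [hg]
    have hch : ((n+2).choose (j+1) : ℝ) = ((n+1).choose j : ℝ) + ((n+1).choose (j+1) : ℝ) := by
      rw [← Nat.cast_add, ← Nat.choose_succ_succ]
    rw [hch]
    ring

lemma bspline_rep (p : ℕ) (hp : 1 ≤ p) (x : ℝ) :
    (p.factorial : ℝ) * cardinalBSpline p x
      = ∑ k ∈ Finset.range (p+2), (-1:ℝ)^k * ((p+1).choose k) * tp p (x - k) := by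
  induction p, hp using Nat.le_induction generalizing x with
  | base =>
    rw [bspline_one]
    rw [Finset.sum_range_succ, Finset.sum_range_succ, Finset.sum_range_succ,
      Finset.sum_range_zero]
    have e0 : tp 1 (x - (0:ℕ)) = max x 0 := by
      simp [tp, pow_one]
    have e1 : tp 1 (x - (1:ℕ)) = max (x-1) 0 := by
      simp [tp, pow_one]
    have e2 : tp 1 (x - (2:ℕ)) = max (x-2) 0 := by
      norm_num [tp, pow_one]
    rw [e0, e1, e2]
    push_cast
    norm_num
    ring
  | succ p hp1 ih =>
    have ihx : ∀ y : ℝ, (p.factorial:ℝ) * cardinalBSpline p (x - y)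
        = ∑ k ∈ Finset.range (p+2), (-1:ℝ)^k * ((p+1).choose k) * tp p ((x - k) - y) := by
      intro y
      rw [ih (x - y)]
      apply Finset.sum_congr rfl
      intro k _
      congr 1
      congr 1
      ring
    have hfact : ((p+1).factorial : ℝ) = (p+1) * p.factorial := by
      rw [Nat.factorial_succ]; push_cast; ring
    have hstep1 : ((p+1).factorial:ℝ) * cardinalBSpline (p+1) x
        = (p+1:ℝ) * ∫ y in (0:ℝ)..1, (p.factorial:ℝ) * cardinalBSpline p (x - y) := by
      rw [intervalIntegral.integral_const_mul]
      have hdef : cardinalBSpline (p+1) x = ∫ y in (0:ℝ)..1, cardinalBSpline p (x-y) := rfl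
      rw [hdef, hfact]
      ring
    rw [hstep1]
    have hstep2 : (∫ y in (0:ℝ)..1, (p.factorial:ℝ) * cardinalBSpline p (x - y))
        = ∑ k ∈ Finset.range (p+2), (-1:ℝ)^k * ((p+1).choose k)
            * ((tp (p+1) (x-k) - tp (p+1) (x-k-1)) / (p+1)) := by
      rw [intervalIntegral.integral_congr (g := fun y => ∑ k ∈ Finset.range (p+2),
          (-1:ℝ)^k * ((p+1).choose k) * tp p ((x - k) - y))]
      · rw [intervalIntegral.integral_finset_sum]
        · apply Finset.sum_congr rfl
          intro k _
          rw [intervalIntegral.integral_const_mul, tp_integral p (by omega) (x - k)]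
        · intro k _
          apply Continuous.intervalIntegrable
          exact continuous_const.mul ((tp_continuous p).comp (continuous_const.sub continuous_id))
      · intro y _
        exact ihx y
    rw [hstep2, Finset.mul_sum]
    have hstep3 : ∀ k ∈ Finset.range (p+2), (p+1:ℝ) * ((-1:ℝ)^k * ((p+1).choose k)
          * ((tp (p+1) (x-k) - tp (p+1) (x-k-1)) / (p+1)))
        = (-1:ℝ)^k * ((p+1).choose k) * ((fun j : ℕ => tp (p+1) (x - j)) k
            - (fun j : ℕ => tp (p+1) (x - j)) (k+1)) := by
      intro k _
      have hne : (p+1:ℝ) ≠ 0 := by positivity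
      have harg : x - (k:ℝ) - 1 = x - ((k+1:ℕ):ℝ) := by push_cast; ring
      rw [harg]
      field_simp
    rw [Finset.sum_congr rfl hstep3, pascal_step p (fun j : ℕ => tp (p+1) (x - j))]

lemma poly_vanish (P : Polynomial ℝ) {a b : ℝ} (hab : a < b)
    (h : ∀ x ∈ Set.Ioo a b, P.eval x = 0) : P = 0 := by
  apply Polynomial.eq_zero_of_infinite_isRoot
  exact Set.Infinite.mono (fun x hx => h x hx) (Set.Ioo_infinite hab)

lemma step2' (p : ℕ) (hp : p ≠ 0) (T : Finset ℝ)
    (hT : ∀ t ∈ T, 0 < t ∧ t < 1) (a : ℝ → ℝ)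
    (hrel : ∀ x ∈ Set.Ioo (0:ℝ) 1, ∑ t ∈ T, a t * (tp p (x - t) - (x - t)^p) = 0) :
    ∀ t ∈ T, a t = 0 := by
  classical
  induction T using Finset.strongInduction with
  | _ T ih =>
  intro t ht
  have hne : T.Nonempty := ⟨t, ht⟩
  have ht1 := T.min'_mem hne
  set t₁ := T.min' hne with ht₁
  have h01 : 0 < t₁ ∧ t₁ < 1 := hT t₁ ht1
  set E := T.erase t₁ with hE
  have hEsub : E ⊂ T := Finset.erase_ssubset ht1
  set u : ℝ := if h : E.Nonempty then E.min' h else 1 with hu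
  have hu1 : u ≤ 1 := by
    rw [hu]
    split_ifs with h
    · exact (hT _ (Finset.mem_of_mem_erase (E.min'_mem h))).2.le
    · exact le_refl 1
  have ht₁u : t₁ < u := by
    rw [hu]
    split_ifs with h
    · have hmem := Finset.mem_of_mem_erase (E.min'_mem h)
      have hne' := Finset.ne_of_mem_erase (E.min'_mem h)
      exact lt_of_le_of_ne (Finset.min'_le T _ hmem) (Ne.symm hne')
    · exact h01.2
  have hlt : ∀ s ∈ E, u ≤ s := by
    intro s hs
    rw [hu, dif_pos ⟨s, hs⟩]
    exact Finset.min'_le E s hs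
  set S : Polynomial ℝ := ∑ s ∈ T, Polynomial.C (a s) * (Polynomial.X - Polynomial.C s)^p
    with hS
  have hS0 : S = 0 := by
    apply poly_vanish S h01.1
    intro x hx
    rw [hS, Polynomial.eval_finset_sum]
    have hrelx := hrel x ⟨hx.1, lt_trans hx.2 h01.2⟩
    rw [← neg_eq_zero, ← hrelx, ← Finset.sum_neg_distrib]
    apply Finset.sum_congr rfl
    intro s hs
    have hxs : x - s < 0 := by
      have := Finset.min'_le T s hs
      have := hx.2
      linarith
    rw [tp_of_nonpos hxs.le hp]
    simp only [Polynomial.eval_mul, Polynomial.eval_pow, Polynomial.eval_sub,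
      Polynomial.eval_X, Polynomial.eval_C]
    ring
  set S₁ : Polynomial ℝ := ∑ s ∈ E, Polynomial.C (a s) * (Polynomial.X - Polynomial.C s)^p
    with hS₁
  have hS₁0 : S₁ = 0 := by
    apply poly_vanish S₁ ht₁u
    intro x hx
    rw [hS₁, Polynomial.eval_finset_sum]
    have hx01 : x ∈ Set.Ioo (0:ℝ) 1 := ⟨lt_trans h01.1 hx.1, lt_of_lt_of_le hx.2 hu1⟩
    have hrelx := hrel x hx01
    rw [← Finset.sum_erase_add T _ ht1, ← hE] at hrelx
    have hterm : a t₁ * (tp p (x - t₁) - (x - t₁)^p) = 0 := by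
      rw [tp_of_nonneg (by linarith [hx.1] : (0:ℝ) ≤ x - t₁)]
      ring
    rw [hterm, add_zero] at hrelx
    rw [← neg_eq_zero, ← hrelx, ← Finset.sum_neg_distrib]
    apply Finset.sum_congr rfl
    intro s hs
    have hxs : x - s < 0 := by
      have := hlt s hs
      have := hx.2
      linarith
    rw [tp_of_nonpos hxs.le hp]
    simp only [Polynomial.eval_mul, Polynomial.eval_pow, Polynomial.eval_sub,
      Polynomial.eval_X, Polynomial.eval_C]
    ring
  have hterm0 : Polynomial.C (a t₁) * (Polynomial.X - Polynomial.C t₁)^p = 0 := by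
    have h3 : S₁ + Polynomial.C (a t₁) * (Polynomial.X - Polynomial.C t₁)^p = S := by
      rw [hS, hS₁, hE]
      exact Finset.sum_erase_add T _ ht1
    rw [hS0, hS₁0, zero_add] at h3
    exact h3
  have hat₁ : a t₁ = 0 := by
    have h4 := congrArg (Polynomial.eval (t₁ + 1)) hterm0
    simpa using h4
  rcases eq_or_ne t t₁ with rfl | htne
  · exact hat₁
  · apply ih E hEsub (fun s hs => hT s (Finset.mem_of_mem_erase hs)) ?_ t
      (Finset.mem_erase.mpr ⟨htne, ht⟩)
    intro x hx
    have hrelx := hrel x hx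
    rw [← Finset.sum_erase_add T _ ht1, ← hE, hat₁, zero_mul, add_zero] at hrelx
    exact hrelx

lemma knots_vanish (p : ℕ) (hp : p ≠ 0) (T : Finset ℝ)
    (hT : ∀ t ∈ T, t < 1) (A : ℝ → ℝ)
    (h : ∀ x ∈ Set.Ioo (0:ℝ) 1, ∑ t ∈ T, A t * tp p (x - t) = 0) :
    ∀ t ∈ T, 0 < t → A t = 0 := by
  classical
  rcases Finset.eq_empty_or_nonempty T with rfl | hne
  · simp
  set R : Polynomial ℝ := ∑ s ∈ T, Polynomial.C (A s) * (Polynomial.X - Polynomial.C s)^p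
    with hR
  have htmax := T.max'_mem hne
  set tmax := T.max' hne with htmax'
  have hmax1 : tmax < 1 := hT _ htmax
  have hlow : max tmax 0 < 1 := by
    rw [max_lt_iff]; exact ⟨hmax1, one_pos⟩
  have hR0 : R = 0 := by
    apply poly_vanish R hlow
    intro x hx
    rw [hR, Polynomial.eval_finset_sum]
    have hx01 : x ∈ Set.Ioo (0:ℝ) 1 := ⟨lt_of_le_of_lt (le_max_right _ _) hx.1, hx.2⟩
    have hrelx := h x hx01
    rw [← hrelx]
    apply Finset.sum_congr rfl
    intro s hs
    have hge : 0 ≤ x - s := by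
      have h1 : s ≤ tmax := Finset.le_max' T s hs
      have h2 : tmax ≤ max tmax 0 := le_max_left _ _
      have := hx.1
      linarith
    rw [tp_of_nonneg hge]
    simp only [Polynomial.eval_mul, Polynomial.eval_pow, Polynomial.eval_sub,
      Polynomial.eval_X, Polynomial.eval_C]
  intro t ht htpos
  have hT' : ∀ s ∈ T.filter (fun t => 0 < t), 0 < s ∧ s < 1 := by
    intro s hs
    rw [Finset.mem_filter] at hs
    exact ⟨hs.2, hT s hs.1⟩
  apply step2' p hp (T.filter (fun t => 0 < t)) hT' A ?_ t
    (Finset.mem_filter.mpr ⟨ht, htpos⟩)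
  intro x hx
  have hfil : ∑ s ∈ T.filter (fun t => 0 < t), A s * (tp p (x - s) - (x - s)^p)
      = ∑ s ∈ T, A s * (tp p (x - s) - (x - s)^p) := by
    apply Finset.sum_filter_of_ne
    intro s hs hne0
    by_contra hsle
    push_neg at hsle
    have hge : 0 ≤ x - s := by
      have := hx.1
      linarith
    rw [tp_of_nonneg hge, sub_self, mul_zero] at hne0
    exact hne0 rfl
  rw [hfil]
  have hsplit : ∑ s ∈ T, A s * (tp p (x - s) - (x - s)^p)
      = (∑ s ∈ T, A s * tp p (x - s)) - R.eval x := by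
    rw [hR, Polynomial.eval_finset_sum, ← Finset.sum_sub_distrib]
    apply Finset.sum_congr rfl
    intro s _
    simp only [Polynomial.eval_mul, Polynomial.eval_pow, Polynomial.eval_sub,
      Polynomial.eval_X, Polynomial.eval_C]
    ring
  rw [hsplit, h x hx, hR0]
  simp

/-- `ℤ`-indexed binomial coefficient (real-valued). -/
noncomputable def cm (m : ℕ) (z : ℤ) : ℝ := if 0 ≤ z then (m.choose z.toNat : ℝ) else 0

lemma cm_ofNat (m s : ℕ) : cm m (s : ℤ) = (m.choose s : ℝ) := by
  simp [cm]

lemma cm_neg (m : ℕ) {z : ℤ} (h : z < 0) : cm m z = 0 := by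
  simp [cm, not_le.mpr h]

lemma cm_gt (m : ℕ) {z : ℤ} (h : (m:ℤ) < z) : cm m z = 0 := by
  rw [cm, if_pos (le_of_lt (lt_of_le_of_lt (Int.ofNat_nonneg m) h))]
  rw [Nat.choose_eq_zero_of_lt (by omega)]
  simp

lemma cm_symm (M : ℕ) (z : ℤ) : cm M z = cm M ((M:ℤ) - z) := by
  rcases lt_or_ge z 0 with h | h
  · rw [cm_neg _ h, cm_gt _ (by omega)]
  rcases le_or_gt z (M:ℤ) with h2 | h2
  · rw [cm, cm, if_pos h, if_pos (by omega)]
    congr 1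
    have e : ((M:ℤ) - z).toNat = M - z.toNat := by omega
    rw [e, Nat.choose_symm (by omega)]
  · rw [cm_gt _ h2, cm_neg _ (by omega)]

lemma sum_range_add' {M₀ : Type*} [AddCommMonoid M₀] (f : ℕ → M₀) (K M : ℕ)
    (hf : ∀ s < K, f s = 0) :
    ∑ s ∈ Finset.range (K + M), f s = ∑ j ∈ Finset.range M, f (K + j) := by
  induction M with
  | zero =>
    rw [Finset.sum_range_zero, add_zero]
    exact Finset.sum_eq_zero (fun s hs => hf s (Finset.mem_range.mp hs))
  | succ M ihM =>
    rw [show K + (M+1) = (K+M)+1 by ring, Finset.sum_range_succ, ihM,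
      Finset.sum_range_succ]

lemma nat_vdm (m d : ℕ) :
    ∑ j ∈ Finset.range (m+1), m.choose (2*d + j) * m.choose j
      = (2*m).choose (m + 2*d) := by
  rw [show 2*m = m + m from two_mul m, Nat.add_choose_eq]
  rw [Finset.Nat.sum_antidiagonal_eq_sum_range_succ_mk]
  dsimp only
  rw [show (m + 2*d).succ = 2*d + (m+1) by omega]
  rw [sum_range_add' _ (2*d) (m+1) ?_]
  · apply Finset.sum_congr rfl
    intro j hj
    rw [Finset.mem_range] at hj
    have h2 : m + 2*d - (2*d + j) = m - j := by omega
    rw [h2, Nat.choose_symm (by omega : j ≤ m), mul_comm]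
  · intro s hs
    rw [Nat.choose_eq_zero_of_lt (by omega : m < m + 2*d - s), mul_zero]

lemma vdm_le (m n a b : ℕ) (ha : a < n) (hb : b < n) (hab : a ≤ b) :
    ∑ t ∈ Finset.range (m + 2*n), cm m ((t:ℤ) - 2*a) * cm m ((t:ℤ) - 2*b)
      = cm (2*m) ((m:ℤ) + 2*b - 2*a) := by
  set d : ℕ := b - a with hd
  have hbad : (b:ℤ) - a = (d:ℤ) := by
    rw [hd]; push_cast [Nat.cast_sub hab]; ring
  have step1 : ∑ t ∈ Finset.range (m + 2*n), cm m ((t:ℤ) - 2*a) * cm m ((t:ℤ) - 2*b)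
      = ∑ t ∈ Finset.range (2*a + (m + 1)), cm m ((t:ℤ) - 2*a) * cm m ((t:ℤ) - 2*b) := by
    symm
    apply Finset.sum_subset
    · exact Finset.range_subset_range.mpr (by omega)
    · intro t _ ht
      rw [Finset.mem_range, not_lt] at ht
      have : (m:ℤ) < (t:ℤ) - 2*a := by push_cast; omega
      rw [cm_gt m this, zero_mul]
  have step2 : ∑ t ∈ Finset.range (2*a + (m + 1)), cm m ((t:ℤ) - 2*a) * cm m ((t:ℤ) - 2*b)
      = ∑ j ∈ Finset.range (m + 1), cm m (j:ℤ) * cm m ((j:ℤ) - 2*d) := by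
    rw [sum_range_add' _ (2*a) (m+1) ?_]
    · apply Finset.sum_congr rfl
      intro j _
      have e1 : ((2*a + j : ℕ):ℤ) - 2*(a:ℤ) = (j:ℤ) := by push_cast; ring
      have e2 : ((2*a + j : ℕ):ℤ) - 2*(b:ℤ) = (j:ℤ) - 2*(d:ℤ) := by
        push_cast
        push_cast at hbad
        omega
      rw [e1, e2]
    · intro s hs
      have : ((s:ℤ) - 2*a) < 0 := by push_cast; omega
      rw [cm_neg m this, zero_mul]
  have step3 : ∑ j ∈ Finset.range (m + 1), cm m (j:ℤ) * cm m ((j:ℤ) - 2*d)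
      = ∑ j ∈ Finset.range (2*d + (m + 1)), cm m (j:ℤ) * cm m ((j:ℤ) - 2*d) := by
    apply Finset.sum_subset
    · exact Finset.range_subset_range.mpr (by omega)
    · intro t _ ht
      rw [Finset.mem_range, not_lt] at ht
      have : (m:ℤ) < (t:ℤ) := by push_cast; omega
      rw [cm_gt m this, zero_mul]
  have step4 : ∑ j ∈ Finset.range (2*d + (m + 1)), cm m (j:ℤ) * cm m ((j:ℤ) - 2*d)
      = ∑ i ∈ Finset.range (m + 1), cm m ((2*d + i : ℕ) : ℤ) * cm m (i:ℤ) := by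
    rw [sum_range_add' _ (2*d) (m+1) ?_]
    · apply Finset.sum_congr rfl
      intro i _
      have e3 : ((2*d + i : ℕ):ℤ) - 2*(d:ℤ) = (i:ℤ) := by push_cast; ring
      rw [e3]
    · intro s hs
      have : ((s:ℤ) - 2*d) < 0 := by push_cast; omega
      rw [cm_neg m this, mul_zero]
  have step5 : ∑ i ∈ Finset.range (m + 1), cm m ((2*d + i : ℕ) : ℤ) * cm m (i:ℤ)
      = ((2*m).choose (m + 2*d) : ℝ) := by
    rw [← nat_vdm m d, Nat.cast_sum]
    apply Finset.sum_congr rfl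
    intro i _
    rw [cm_ofNat, cm_ofNat]
    push_cast
    ring
  rw [step1, step2, step3, step4, step5]
  have harg : (m:ℤ) + 2*b - 2*a = ((m + 2*d : ℕ) : ℤ) := by
    push_cast
    push_cast at hbad
    omega
  rw [harg, cm_ofNat]

lemma vdm (m n a b : ℕ) (ha : a < n) (hb : b < n) :
    ∑ t ∈ Finset.range (m + 2*n), cm m ((t:ℤ) - 2*a) * cm m ((t:ℤ) - 2*b)
      = cm (2*m) ((m:ℤ) + 2*b - 2*a) := by
  rcases le_total a b with hab | hab
  · exact vdm_le m n a b ha hb hab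
  · calc ∑ t ∈ Finset.range (m + 2*n), cm m ((t:ℤ) - 2*a) * cm m ((t:ℤ) - 2*b)
        = ∑ t ∈ Finset.range (m + 2*n), cm m ((t:ℤ) - 2*b) * cm m ((t:ℤ) - 2*a) := by
          apply Finset.sum_congr rfl
          intro t _
          ring
      _ = cm (2*m) ((m:ℤ) + 2*a - 2*b) := vdm_le m n b a hb ha hab
      _ = cm (2*m) ((m:ℤ) + 2*b - 2*a) := by
          rw [cm_symm (2*m) ((m:ℤ) + 2*a - 2*b)]
          congr 1
          push_cast
          ring

lemma gram (m n : ℕ) (v : ℕ → ℝ)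
    (hv : ∀ b < n, ∑ a ∈ Finset.range n, v a * cm (2*m) ((m:ℤ) + 2*b - 2*a) = 0) :
    ∀ a < n, v a = 0 := by
  have hsq : ∑ t ∈ Finset.range (m + 2*n),
      (∑ a ∈ Finset.range n, v a * cm m ((t:ℤ) - 2*a))^2 = 0 := by
    have expand : ∀ t : ℕ, (∑ a ∈ Finset.range n, v a * cm m ((t:ℤ) - 2*a))^2
        = ∑ a ∈ Finset.range n, ∑ b ∈ Finset.range n,
            (v a * cm m ((t:ℤ) - 2*a)) * (v b * cm m ((t:ℤ) - 2*b)) := by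
      intro t
      rw [pow_two, Finset.sum_mul]
      apply Finset.sum_congr rfl
      intro a _
      rw [Finset.mul_sum]
    calc ∑ t ∈ Finset.range (m + 2*n), (∑ a ∈ Finset.range n, v a * cm m ((t:ℤ) - 2*a))^2
        = ∑ t ∈ Finset.range (m + 2*n), ∑ a ∈ Finset.range n, ∑ b ∈ Finset.range n,
            (v a * cm m ((t:ℤ) - 2*a)) * (v b * cm m ((t:ℤ) - 2*b)) :=
          Finset.sum_congr rfl (fun t _ => expand t)
      _ = ∑ a ∈ Finset.range n, ∑ t ∈ Finset.range (m + 2*n), ∑ b ∈ Finset.range n,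
            (v a * cm m ((t:ℤ) - 2*a)) * (v b * cm m ((t:ℤ) - 2*b)) := Finset.sum_comm
      _ = ∑ a ∈ Finset.range n, ∑ b ∈ Finset.range n, ∑ t ∈ Finset.range (m + 2*n),
            (v a * cm m ((t:ℤ) - 2*a)) * (v b * cm m ((t:ℤ) - 2*b)) :=
          Finset.sum_congr rfl (fun a _ => Finset.sum_comm)
      _ = ∑ a ∈ Finset.range n, ∑ b ∈ Finset.range n,
            v a * v b * cm (2*m) ((m:ℤ) + 2*b - 2*a) := by
          apply Finset.sum_congr rfl
          intro a ha
          apply Finset.sum_congr rfl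
          intro b hb
          rw [show ∀ X Y : ℝ, (∑ t ∈ Finset.range (m + 2*n),
              (v a * cm m ((t:ℤ) - 2*a)) * (v b * cm m ((t:ℤ) - 2*b))) =
              v a * v b * ∑ t ∈ Finset.range (m + 2*n),
              cm m ((t:ℤ) - 2*a) * cm m ((t:ℤ) - 2*b) from fun _ _ => by
            rw [Finset.mul_sum]
            apply Finset.sum_congr rfl
            intro t _
            ring]
          · rw [vdm m n a b (Finset.mem_range.mp ha) (Finset.mem_range.mp hb)]
          · exact 0
          · exact 0
      _ = ∑ b ∈ Finset.range n, ∑ a ∈ Finset.range n,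
            v a * v b * cm (2*m) ((m:ℤ) + 2*b - 2*a) := Finset.sum_comm
      _ = 0 := by
          apply Finset.sum_eq_zero
          intro b hb
          have : ∑ a ∈ Finset.range n, v a * v b * cm (2*m) ((m:ℤ) + 2*b - 2*a)
              = v b * ∑ a ∈ Finset.range n, v a * cm (2*m) ((m:ℤ) + 2*b - 2*a) := by
            rw [Finset.mul_sum]
            apply Finset.sum_congr rfl
            intro a _
            ring
          rw [this, hv b (Finset.mem_range.mp hb), mul_zero]
  have hGzero : ∀ t ∈ Finset.range (m + 2*n),
      (∑ a ∈ Finset.range n, v a * cm m ((t:ℤ) - 2*a)) = 0 := by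
    intro t ht
    have h0 := (Finset.sum_eq_zero_iff_of_nonneg
      (s := Finset.range (m + 2*n))
      (f := fun t : ℕ => (∑ a ∈ Finset.range n, v a * cm m ((t:ℤ) - 2*a))^2)
      (fun i _ => sq_nonneg _)).mp hsq t ht
    exact pow_eq_zero_iff (by norm_num) |>.mp h0
  intro a
  induction a using Nat.strong_induction_on with
  | _ a ih =>
  intro han
  have h2a : 2*a ∈ Finset.range (m + 2*n) := Finset.mem_range.mpr (by omega)
  have hGa := hGzero (2*a) h2a
  rw [Finset.sum_eq_single a] at hGa
  · rw [show (((2*a : ℕ)) : ℤ) - 2*a = 0 by push_cast; ring] at hGa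
    rw [cm, if_pos le_rfl] at hGa
    simpa using hGa
  · intro a' ha' hne
    rcases lt_or_gt_of_ne hne with h | h
    · rw [ih a' h (Finset.mem_range.mp ha'), zero_mul]
    · have : (((2*a : ℕ)) : ℤ) - 2*a' < 0 := by push_cast; omega
      rw [cm_neg m this, mul_zero]
  · intro h
    exact absurd (Finset.mem_range.mpr (by omega)) h

lemma alt1 (n K : ℕ) :
    ∑ k ∈ Finset.range (K+1), (-1:ℝ)^k * ((n+1).choose k : ℝ)
      = (-1)^K * (n.choose K : ℝ) := by
  induction K with
  | zero => simp
  | succ K ih =>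
    rw [Finset.sum_range_succ, ih]
    have : ((n+1).choose (K+1) : ℝ) = (n.choose K : ℝ) + (n.choose (K+1) : ℝ) := by
      rw [← Nat.cast_add, ← Nat.choose_succ_succ]
    rw [this]
    ring

lemma alt2 (n K : ℕ) :
    ∑ k ∈ Finset.range (K+2), (-1:ℝ)^k * ((n+2).choose k : ℝ) * k
      = (n+2) * (-1)^(K+1) * (n.choose K : ℝ) := by
  have h0 : ∑ k ∈ Finset.range (K+2), (-1:ℝ)^k * ((n+2).choose k : ℝ) * k
      = ∑ k ∈ Finset.range (K+1),
          (-1:ℝ)^(k+1) * ((n+2).choose (k+1) : ℝ) * ((k:ℝ)+1) := by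
    rw [Finset.sum_range_succ' (fun k => (-1:ℝ)^k * ((n+2).choose k : ℝ) * (k:ℝ)) (K+1)]
    norm_num
  rw [h0]
  have h1 : ∀ k : ℕ, (-1:ℝ)^(k+1) * ((n+2).choose (k+1) : ℝ) * ((k:ℝ)+1)
      = -(n+2) * ((-1:ℝ)^k * ((n+1).choose k : ℝ)) := by
    intro k
    have h2 : ((n+2).choose (k+1) : ℝ) * ((k:ℝ)+1) = (n+2) * ((n+1).choose k : ℝ) := by
      have h4 : (n+2) * (n+1).choose k = (n+2).choose (k+1) * (k+1) := by
        simpa [Nat.succ_eq_add_one] using Nat.add_one_mul_choose_eq (n+1) k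
      have h5 : ((n:ℝ)+2) * ((n+1).choose k : ℝ) = ((n+2).choose (k+1) : ℝ) * ((k:ℝ)+1) := by
        exact_mod_cast h4
      linarith
    calc (-1:ℝ)^(k+1) * ((n+2).choose (k+1) : ℝ) * ((k:ℝ)+1)
        = (-1:ℝ)^(k+1) * (((n+2).choose (k+1) : ℝ) * ((k:ℝ)+1)) := by ring
      _ = (-1:ℝ)^(k+1) * ((n+2) * ((n+1).choose k : ℝ)) := by rw [h2]
      _ = -(n+2) * ((-1:ℝ)^k * ((n+1).choose k : ℝ)) := by ring
  rw [Finset.sum_congr rfl (fun k _ => h1 k), ← Finset.mul_sum, alt1 n K]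
  ring
lemma level0 (p m : ℕ) (hm : 1 ≤ m) (hp2 : p + 1 = 2*m) (c : ℕ → ℝ)
    (hrel : ∀ x ∈ Set.Ioo (0:ℝ) 1,
      ∑ i ∈ hierIndex 0, c i * ∑ k ∈ Finset.range (p+2),
        (-1:ℝ)^k * ((p+1).choose k : ℝ) * tp p (x + m - i - k) = 0) :
    ∀ i ∈ hierIndex 0, c i = 0 := by
  have hp : p ≠ 0 := by omega
  set w : ℕ → ℝ := fun k => (-1:ℝ)^k * ((p+1).choose k : ℝ) with hw
  -- convert truncated powers to polynomials on (0,1)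
  have key : ∀ (i : ℕ), i ≤ 1 → ∀ x ∈ Set.Ioo (0:ℝ) 1,
      ∑ k ∈ Finset.range (p+2), w k * tp p (x + m - i - k)
      = ∑ k ∈ Finset.range (m+1-i), w k * (x + ((m:ℝ) - i - k))^p := by
    intro i hi x hx
    have hsub : Finset.range (m+1-i) ⊆ Finset.range (p+2) := Finset.range_subset_range.mpr (by omega)
    rw [← Finset.sum_subset hsub ?_]
    · apply Finset.sum_congr rfl
      intro k hk
      rw [Finset.mem_range] at hk
      have hki : k + i ≤ m := by omega
      have hk' : (k:ℝ) + i ≤ (m:ℝ) := by exact_mod_cast hki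
      have harg : (0:ℝ) ≤ x + m - i - k := by
        have := hx.1
        linarith
      rw [tp_of_nonneg harg]
      congr 1
      ring
    · intro k hk1 hk2
      rw [Finset.mem_range] at hk1
      rw [Finset.mem_range, not_lt] at hk2
      have hki : m + 1 ≤ k + i := by omega
      have hk' : (m:ℝ) + 1 ≤ (k:ℝ) + i := by exact_mod_cast hki
      have harg : x + m - i - k ≤ 0 := by
        have := hx.2
        linarith
      rw [tp_of_nonpos harg hp, mul_zero]
  -- the polynomial
  set QQ : ℕ → Polynomial ℝ := fun i => ∑ k ∈ Finset.range (m+1-i),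
    Polynomial.C (w k) * (Polynomial.X + Polynomial.C ((m:ℝ) - i - k))^p with hQQ
  have hQeval : ∀ (i : ℕ) (x : ℝ), (QQ i).eval x
      = ∑ k ∈ Finset.range (m+1-i), w k * (x + ((m:ℝ) - i - k))^p := by
    intro i x
    rw [hQQ]
    rw [Polynomial.eval_finset_sum]
    apply Finset.sum_congr rfl
    intro k _
    simp
  have hP : Polynomial.C (c 0) * QQ 0 + Polynomial.C (c 1) * QQ 1 = 0 := by
    apply poly_vanish _ one_pos
    intro x hx
    have h0 := hrel x hx
    rw [show hierIndex 0 = {0, 1} from rfl] at h0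
    rw [Finset.sum_pair (by norm_num : (0:ℕ) ≠ 1)] at h0
    rw [key 0 (by norm_num) x hx, key 1 (by norm_num) x hx] at h0
    simp only [Polynomial.eval_add, Polynomial.eval_mul, Polynomial.eval_C]
    rw [hQeval 0 x, hQeval 1 x]
    exact h0
  have hcoeff : ∀ j : ℕ, c 0 * (QQ 0).coeff j + c 1 * (QQ 1).coeff j = 0 := by
    intro j
    have h1 := congrArg (fun P : Polynomial ℝ => P.coeff j) hP
    simpa using h1
  -- top coefficient
  have hQtop : ∀ i : ℕ, (QQ i).coeff p = ∑ k ∈ Finset.range (m+1-i), w k := by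
    intro i
    rw [hQQ]
    rw [Polynomial.finset_sum_coeff]
    apply Finset.sum_congr rfl
    intro k _
    rw [Polynomial.coeff_C_mul, Polynomial.coeff_X_add_C_pow]
    simp
  have hQsub : ∀ i : ℕ, (QQ i).coeff (p-1)
      = ∑ k ∈ Finset.range (m+1-i), w k * (((m:ℝ) - i - k) * p) := by
    intro i
    rw [hQQ]
    rw [Polynomial.finset_sum_coeff]
    apply Finset.sum_congr rfl
    intro k _
    rw [Polynomial.coeff_C_mul, Polynomial.coeff_X_add_C_pow]
    have e1 : p - (p-1) = 1 := by omega
    have e2 : p.choose (p-1) = p := by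
      have h3 := Nat.choose_symm (by omega : p - 1 ≤ p)
      rw [show p - (p-1) = 1 by omega] at h3
      rw [← h3, Nat.choose_one_right]
    rw [e1, e2, pow_one]
  -- the two linear equations
  have E1 : c 0 * (∑ k ∈ Finset.range (m+1), w k)
      + c 1 * (∑ k ∈ Finset.range m, w k) = 0 := by
    have := hcoeff p
    rw [hQtop 0, hQtop 1] at this
    rw [show m + 1 - 0 = m + 1 by omega, show m + 1 - 1 = m by omega] at this
    exact this
  have E2 : c 0 * (∑ k ∈ Finset.range (m+1), w k * ((m:ℝ) - ((0:ℕ):ℝ) - k))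
      + c 1 * (∑ k ∈ Finset.range m, w k * ((m:ℝ) - ((1:ℕ):ℝ) - k)) = 0 := by
    have h4 := hcoeff (p-1)
    rw [hQsub 0, hQsub 1] at h4
    rw [show m + 1 - 0 = m + 1 by omega, show m + 1 - 1 = m by omega] at h4
    have e0 : ∑ k ∈ Finset.range (m+1), w k * (((m:ℝ) - ((0:ℕ):ℝ) - k) * (p:ℝ))
        = (∑ k ∈ Finset.range (m+1), w k * ((m:ℝ) - ((0:ℕ):ℝ) - k)) * (p:ℝ) := by
      rw [Finset.sum_mul]
      exact Finset.sum_congr rfl (fun k _ => by ring)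
    have e1 : ∑ k ∈ Finset.range m, w k * (((m:ℝ) - ((1:ℕ):ℝ) - k) * (p:ℝ))
        = (∑ k ∈ Finset.range m, w k * ((m:ℝ) - ((1:ℕ):ℝ) - k)) * (p:ℝ) := by
      rw [Finset.sum_mul]
      exact Finset.sum_congr rfl (fun k _ => by ring)
    rw [e0, e1] at h4
    have hpne : (p:ℝ) ≠ 0 := Nat.cast_ne_zero.mpr hp
    have h6 : (c 0 * (∑ k ∈ Finset.range (m+1), w k * ((m:ℝ) - ((0:ℕ):ℝ) - k))
        + c 1 * (∑ k ∈ Finset.range m, w k * ((m:ℝ) - ((1:ℕ):ℝ) - k))) * (p:ℝ) = 0 := by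
      linear_combination h4
    rcases mul_eq_zero.mp h6 with h7 | h7
    · exact h7
    · exact absurd h7 hpne
  -- closed forms
  have hS0 : ∑ k ∈ Finset.range (m+1), w k = (-1:ℝ)^m * (p.choose m : ℝ) := by
    rw [hw]
    exact alt1 p m
  have hS1 : ∑ k ∈ Finset.range m, w k = (-1:ℝ)^(m-1) * (p.choose (m-1) : ℝ) := by
    rw [hw, show m = (m-1)+1 by omega]
    rw [show m - 1 + 1 - 1 = m - 1 by omega]
    exact alt1 p (m-1)
  have hT0 : ∑ k ∈ Finset.range (m+1), w k * (k:ℝ)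
      = ((p:ℝ)+1) * (-1:ℝ)^m * ((p-1).choose (m-1) : ℝ) := by
    have h8 := alt2 (p-1) (m-1)
    rw [show p - 1 + 2 = p + 1 by omega, show m - 1 + 2 = m + 1 by omega,
      show m - 1 + 1 = m by omega] at h8
    rw [hw]
    rw [show ((p - 1 : ℕ):ℝ) + 2 = (p:ℝ) + 1 by
      push_cast [Nat.cast_sub (by omega : 1 ≤ p)]; ring] at h8
    exact h8
  have hV0 : ∑ k ∈ Finset.range (m+1), w k * ((m:ℝ) - ((0:ℕ):ℝ) - k)
      = (-1:ℝ)^m * ((m:ℝ) * (p.choose m : ℝ) - ((p:ℝ)+1) * ((p-1).choose (m-1) : ℝ)) := by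
    have split : ∑ k ∈ Finset.range (m+1), w k * ((m:ℝ) - ((0:ℕ):ℝ) - k)
        = (m:ℝ) * (∑ k ∈ Finset.range (m+1), w k)
          - ∑ k ∈ Finset.range (m+1), w k * (k:ℝ) := by
      rw [Finset.mul_sum, ← Finset.sum_sub_distrib]
      exact Finset.sum_congr rfl (fun k _ => by push_cast; ring)
    rw [split, hS0, hT0]
    ring
  have main : c 0 = 0 ∧ c 1 = 0 := by
    rcases eq_or_lt_of_le hm with hm1 | hm2
    · -- m = 1, p = 1
      have hm1' : m = 1 := hm1.symm
      have hp1' : p = 1 := by omega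
      subst hm1'
      subst hp1'
      have e2a : ∑ k ∈ Finset.range (1+1), w k * (((1:ℕ):ℝ) - ((0:ℕ):ℝ) - k) = 1 := by
        rw [hw]
        rw [Finset.sum_range_succ, Finset.sum_range_succ, Finset.sum_range_zero]
        norm_num
      have e2b : ∑ k ∈ Finset.range 1, w k * (((1:ℕ):ℝ) - ((1:ℕ):ℝ) - k) = 0 := by
        rw [hw]
        rw [Finset.sum_range_succ, Finset.sum_range_zero]
        norm_num
      have e1a : ∑ k ∈ Finset.range (1+1), w k = -1 := by
        rw [hw]
        rw [Finset.sum_range_succ, Finset.sum_range_succ, Finset.sum_range_zero]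
        norm_num
      have e1b : ∑ k ∈ Finset.range 1, w k = 1 := by
        rw [hw]
        rw [Finset.sum_range_succ, Finset.sum_range_zero]
        norm_num
      rw [e2a, e2b] at E2
      rw [e1a, e1b] at E1
      constructor
      · linarith
      · linarith
    · -- m ≥ 2
      have hV1 : ∑ k ∈ Finset.range m, w k * ((m:ℝ) - ((1:ℕ):ℝ) - k)
          = (-1:ℝ)^(m-1) * (((m:ℝ)-1) * (p.choose (m-1) : ℝ)
              - ((p:ℝ)+1) * ((p-1).choose (m-2) : ℝ)) := by
        have split : ∑ k ∈ Finset.range m, w k * ((m:ℝ) - ((1:ℕ):ℝ) - k)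
            = ((m:ℝ)-1) * (∑ k ∈ Finset.range m, w k)
              - ∑ k ∈ Finset.range m, w k * (k:ℝ) := by
          rw [Finset.mul_sum, ← Finset.sum_sub_distrib]
          exact Finset.sum_congr rfl (fun k _ => by push_cast; ring)
        have hT1 : ∑ k ∈ Finset.range m, w k * (k:ℝ)
            = ((p:ℝ)+1) * (-1:ℝ)^(m-1) * ((p-1).choose (m-2) : ℝ) := by
          have h8 := alt2 (p-1) (m-2)
          rw [show p - 1 + 2 = p + 1 by omega, show m - 2 + 2 = m by omega,
            show m - 2 + 1 = m - 1 by omega] at h8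
          rw [hw]
          rw [show ((p - 1 : ℕ):ℝ) + 2 = (p:ℝ) + 1 by
            push_cast [Nat.cast_sub (by omega : 1 ≤ p)]; ring] at h8
          exact h8
        rw [split, hS1, hT1]
        ring
      -- abbreviations
      set N : ℝ := (p.choose m : ℝ) with hN
      set C1 : ℝ := ((p-1).choose (m-1) : ℝ) with hC1
      set C2 : ℝ := ((p-1).choose (m-2) : ℝ) with hC2
      have hsymN : (p.choose (m-1) : ℝ) = N := by
        rw [hN]
        have h9 := Nat.choose_symm (by omega : m ≤ p)
        rw [show p - m = m - 1 by omega] at h9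
        exact_mod_cast congrArg (Nat.cast (R := ℝ)) h9
      have hpascalN : N = C2 + C1 := by
        rw [← hsymN, hC1, hC2]
        have h9 : p.choose (m-1) = (p-1).choose (m-2) + (p-1).choose (m-1) := by
          have h10 := Nat.choose_succ_succ (p-1) (m-2)
          rw [show (p-1).succ = p by omega, show (m-2).succ = m - 1 by omega] at h10
          exact h10
        exact_mod_cast congrArg (Nat.cast (R := ℝ)) h9
      have hright : C1 * ((m:ℝ) - 1) = C2 * (m:ℝ) := by
        have h9 := Nat.choose_succ_right_eq (p-1) (m-2)
        rw [show m - 2 + 1 = m - 1 by omega, show p - 1 - (m-2) = m by omega] at h9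
        have h10 : ((p-1).choose (m-1) : ℝ) * ((m-1 : ℕ) : ℝ)
            = ((p-1).choose (m-2) : ℝ) * ((m:ℕ) : ℝ) := by exact_mod_cast h9
        rw [show ((m-1 : ℕ) : ℝ) = (m:ℝ) - 1 by
          push_cast [Nat.cast_sub (by omega : 1 ≤ m)]; ring] at h10
        exact h10
      have hC1pos : (0:ℝ) < C1 := by
        rw [hC1]
        exact_mod_cast Nat.choose_pos (by omega : m - 1 ≤ p - 1)
      have hNne : N ≠ 0 := by
        rw [hN]
        have := Nat.choose_pos (by omega : m ≤ p)
        positivity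
      have hsign : (-1:ℝ)^(m-1) = -(-1:ℝ)^m := by
        rw [show m = (m-1)+1 by omega, pow_succ]
        rw [show m - 1 + 1 - 1 = m - 1 by omega]
        ring
      have hepsne : ((-1:ℝ)^m) ≠ 0 := pow_ne_zero m (by norm_num)
      have hp1cast : (p:ℝ) + 1 = 2 * (m:ℝ) := by exact_mod_cast hp2
      -- E1 gives c0 = c1
      rw [hS0, hS1, hsymN, hsign] at E1
      have hc01 : c 0 = c 1 := by
        have h10 : (-1:ℝ)^m * (N * (c 0 - c 1)) = 0 := by linear_combination E1
        rcases mul_eq_zero.mp h10 with h | h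
        · exact absurd h hepsne
        · rcases mul_eq_zero.mp h with h | h
          · exact absurd h hNne
          · linarith
      -- E2 gives c0 * (C2 - C1) = 0
      rw [hV0, hV1, hsymN, hsign] at E2
      have h12 : (-1:ℝ)^m * (c 0 * (C2 - C1)) = 0 := by
        linear_combination E2
          + (-((((-1:ℝ)^m)*((m:ℝ)-1)*N - ((-1:ℝ)^m)*((p:ℝ)+1)*C2))) * hc01
          + 2*((-1:ℝ)^m)*(c 0)*hright
          + (-(((-1:ℝ)^m)*(c 0)))*hpascalN
          + ((-1:ℝ)^m)*(c 0)*(C1 - C2)*hp1cast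
      have h11 : c 0 * (C2 - C1) = 0 := by
        rcases mul_eq_zero.mp h12 with h | h
        · exact absurd h hepsne
        · exact h
      have hC21 : C2 - C1 ≠ 0 := by
        have h13 : C2 * (m:ℝ) < C1 * (m:ℝ) := by
          rw [← hright]
          nlinarith [hC1pos]
        have hmpos : (0:ℝ) < (m:ℝ) := by positivity
        have : C2 < C1 := by
          exact lt_of_mul_lt_mul_right (by linarith) (le_of_lt hmpos)
        linarith
      have hc0 : c 0 = 0 := by
        rcases mul_eq_zero.mp h11 with h | h
        · exact h
        · exact absurd h hC21
      exact ⟨hc0, hc01 ▸ hc0⟩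
  intro i hi
  have hi' : i = 0 ∨ i = 1 := by
    have h14 := Finset.mem_insert.mp hi
    rcases h14 with h | h
    · exact Or.inl h
    · exact Or.inr (Finset.mem_singleton.mp h)
  rcases hi' with rfl | rfl
  · exact main.1
  · exact main.2

lemma tp_scale (q : ℕ) {s : ℝ} (hs : 0 < s) (u : ℝ) : tp q (s * u) = s^q * tp q u := by
  rw [tp, tp, ← mul_pow]
  congr 1
  rw [mul_max_of_nonneg _ _ hs.le, mul_zero]

lemma hier_image (l : ℕ) (hl : 1 ≤ l) :
    hierIndex l = (Finset.range (2^(l-1))).image (fun a => 2*a+1) := by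
  have h2l : 2^l = 2 * 2^(l-1) := by
    rw [← pow_succ']
    congr 1
    omega
  ext j
  rw [hierIndex, if_neg (by omega)]
  simp only [Finset.mem_filter, Finset.mem_range, Finset.mem_image]
  constructor
  · rintro ⟨hj, a, ha⟩
    exact ⟨a, by omega, by omega⟩
  · rintro ⟨a, ha, rfl⟩
    exact ⟨by omega, a, rfl⟩

lemma hier_rep (p m : ℕ) (hp2 : p + 1 = 2*m) (l i : ℕ) (x : ℝ) :
    (p.factorial : ℝ) * cardinalBSpline p ((2:ℝ)^l * x + ((p:ℝ)+1)/2 - i)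
      = ∑ k ∈ Finset.range (p+2), (-1:ℝ)^k * ((p+1).choose k : ℝ) * ((2:ℝ)^l)^p
          * tp p (x - ((i:ℝ) + k - m)/2^l) := by
  rw [bspline_rep p (by omega)]
  apply Finset.sum_congr rfl
  intro k _
  have h2l : (0:ℝ) < 2^l := by positivity
  have hmr : ((p:ℝ)+1)/2 = (m:ℝ) := by
    have : ((p:ℝ)+1) = 2*(m:ℝ) := by exact_mod_cast hp2
    rw [this]
    ring
  have harg : (2:ℝ)^l * x + ((p:ℝ)+1)/2 - i - k
      = (2:ℝ)^l * (x - ((i:ℝ) + k - m)/2^l) := by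
    rw [hmr]
    field_simp
    ring
  rw [harg, tp_scale p h2l]
  ring

noncomputable def Knot (m : ℕ) (e : (_ : ℕ) × ℕ × ℕ) : ℝ := (((e.2.1:ℝ)) + e.2.2 - m)/2^e.1

noncomputable def Coef (p : ℕ) (c : ℕ → ℕ → ℝ) (e : (_ : ℕ) × ℕ × ℕ) : ℝ :=
  c e.1 e.2.1 * ((-1:ℝ)^e.2.2 * ((p+1).choose e.2.2 : ℝ) * ((2:ℝ)^e.1)^p)

def Sg (p L : ℕ) : Finset ((_ : ℕ) × ℕ × ℕ) :=
  (Finset.range (L+2)).sigma (fun l => (hierIndex l) ×ˢ (Finset.range (p+2)))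

lemma mem_hier {l j : ℕ} (hl : 1 ≤ l) (h : j ∈ hierIndex l) : Odd j ∧ j < 2^l := by
  rw [hierIndex, if_neg (by omega)] at h
  rw [Finset.mem_filter, Finset.mem_range] at h
  exact ⟨h.2, h.1⟩

lemma neg_one_pow_congr {a b : ℕ} (h : a % 2 = b % 2) : (-1:ℝ)^a = (-1:ℝ)^b := by
  rcases Nat.even_or_odd a with ha | ha
  · have hb : Even b := by
      rcases Nat.even_or_odd b with h' | h'
      · exact h'
      · exfalso
        rw [Nat.even_iff] at ha
        rw [Nat.odd_iff] at h'
        omega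
    rw [ha.neg_one_pow, hb.neg_one_pow]
  · have hb : Odd b := by
      rcases Nat.even_or_odd b with h' | h'
      · exfalso
        rw [Nat.odd_iff] at ha
        rw [Nat.even_iff] at h'
        omega
      · exact h'
    rw [ha.neg_one_pow, hb.neg_one_pow]

lemma step_top (p m : ℕ) (hm : 1 ≤ m) (hp2 : p + 1 = 2*m) (L : ℕ) (c : ℕ → ℕ → ℝ)
    (hyp : ∀ x ∈ Set.Ioo (0:ℝ) 1, ∑ l ∈ Finset.range (L+2), ∑ i ∈ hierIndex l,
      c l i * ((p.factorial : ℝ) * cardinalBSpline p ((2:ℝ)^l * x + ((p:ℝ)+1)/2 - i)) = 0) :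
    ∀ i₀ ∈ hierIndex (L+1), c (L+1) i₀ = 0 := by
  classical
  have hp : p ≠ 0 := by omega
  -- the global knot-coefficient relation
  have Fzero : ∀ x ∈ Set.Ioo (0:ℝ) 1,
      ∑ e ∈ Sg p L, Coef p c e * tp p (x - Knot m e) = 0 := by
    intro x hx
    rw [Sg, Finset.sum_sigma]
    rw [← hyp x hx]
    apply Finset.sum_congr rfl
    intro l _
    rw [Finset.sum_product]
    apply Finset.sum_congr rfl
    intro i _
    rw [hier_rep p m hp2 l i x, Finset.mul_sum]
    apply Finset.sum_congr rfl
    intro k _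
    rw [Coef, Knot]
    ring
  -- knots vanish
  set T : Finset ℝ := ((Sg p L).image (Knot m)).filter (fun τ => τ < 1) with hT
  set A : ℝ → ℝ := fun τ => ∑ e ∈ (Sg p L).filter (fun e => Knot m e = τ), Coef p c e
    with hA
  have hTlt : ∀ τ ∈ T, τ < 1 := by
    intro τ hτ
    rw [hT, Finset.mem_filter] at hτ
    exact hτ.2
  have hsum : ∀ x ∈ Set.Ioo (0:ℝ) 1, ∑ τ ∈ T, A τ * tp p (x - τ) = 0 := by
    intro x hx
    have e1 : ∀ τ ∈ T, A τ * tp p (x - τ)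
        = ∑ e ∈ ((Sg p L).filter (fun e => Knot m e < 1)).filter (fun e => Knot m e = τ),
            Coef p c e * tp p (x - Knot m e) := by
      intro τ hτ
      show (∑ e ∈ (Sg p L).filter (fun e => Knot m e = τ), Coef p c e) * tp p (x - τ) = _
      rw [Finset.filter_filter]
      have e2 : (Sg p L).filter (fun e => Knot m e = τ)
          = (Sg p L).filter (fun e => Knot m e < 1 ∧ Knot m e = τ) := by
        apply Finset.filter_congr
        intro e _
        constructor
        · intro h
          exact ⟨h ▸ hTlt τ hτ, h⟩
        · intro h
          exact h.2
      rw [e2, Finset.sum_mul]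
      apply Finset.sum_congr rfl
      intro e he
      rw [Finset.mem_filter] at he
      rw [he.2.2]
    rw [Finset.sum_congr rfl e1]
    rw [Finset.sum_fiberwise_of_maps_to ?_ (fun e => Coef p c e * tp p (x - Knot m e))]
    · rw [← Fzero x hx]
      apply Finset.sum_subset (Finset.filter_subset _ _)
      intro e he hne
      rw [Finset.mem_filter, not_and] at hne
      have h1 : ¬ (Knot m e < 1) := hne he
      have h2 : x - Knot m e ≤ 0 := by
        have := hx.2
        push_neg at h1
        linarith
      rw [tp_of_nonpos h2 hp, mul_zero]
    · intro e he
      rw [Finset.mem_filter] at he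
      rw [hT, Finset.mem_filter]
      exact ⟨Finset.mem_image.mpr ⟨e, he.1, rfl⟩, he.2⟩
  have hAzero : ∀ τ ∈ T, 0 < τ → A τ = 0 :=
    knots_vanish p hp T hTlt A hsum
  -- extract the equations at the odd knots of level L+1
  have heqs : ∀ i₀ ∈ hierIndex (L+1),
      ∑ i ∈ hierIndex (L+1), c (L+1) i * cm (2*m) ((i₀:ℤ) + m - i) = 0 := by
    intro i₀ hi₀
    obtain ⟨hodd₀, hlt₀⟩ := mem_hier (by omega) hi₀
    -- knot characterization
    have hchar : ∀ l, l ≤ L+1 → ∀ i k : ℕ,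
        (Knot m ⟨l, (i, k)⟩ = (i₀:ℝ)/2^(L+1) ↔ (l = L+1 ∧ k + i = i₀ + m)) := by
      intro l hl i k
      have h2l : (0:ℝ) < 2^l := by positivity
      have h2L : (0:ℝ) < 2^(L+1) := by positivity
      rw [Knot]
      rw [div_eq_div_iff h2l.ne' h2L.ne']
      constructor
      · intro h
        have hz : ((i:ℤ) + k - m) * 2^(L+1) = (i₀:ℤ) * 2^l := by
          exact_mod_cast h
        set e := L + 1 - l with he
        have hsplit : (2:ℤ)^(L+1) = 2^e * 2^l := by
          rw [← pow_add]
          congr 1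
          omega
        rw [hsplit, ← mul_assoc] at hz
        have hz2 : ((i:ℤ) + k - m) * 2^e = (i₀:ℤ) := by
          have h2lne : ((2:ℤ)^l) ≠ 0 := by positivity
          exact mul_right_cancel₀ h2lne hz
        have hee : e = 0 := by
          by_contra hene
          have h2div : (2:ℤ) ∣ (i₀:ℤ) := by
            rw [← hz2, show e = (e-1)+1 by omega, pow_succ]
            exact ⟨((i:ℤ) + k - m) * 2^(e-1), by ring⟩
          obtain ⟨b, hb⟩ := hodd₀
          omega
        have hl2 : l = L + 1 := by omega
        subst hl2
        rw [hee, pow_zero, mul_one] at hz2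
        constructor
        · rfl
        · omega
      · rintro ⟨rfl, hk⟩
        have : ((i:ℝ) + k - m) = (i₀:ℝ) := by
          have : (i:ℝ) + k = (i₀:ℝ) + m := by exact_mod_cast congrArg (Nat.cast (R := ℝ)) (by omega : i + k = i₀ + m)
          linarith
        rw [this]
    -- value of A at the knot i₀/2^(L+1)
    have hAval : A ((i₀:ℝ)/2^(L+1))
        = ∑ i ∈ hierIndex (L+1), c (L+1) i
            * ((-1:ℝ)^m * ((2:ℝ)^(L+1))^p * cm (2*m) ((i₀:ℤ) + m - i)) := by
      show (∑ e ∈ (Sg p L).filter (fun e => Knot m e = (i₀:ℝ)/2^(L+1)), Coef p c e) = _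
      rw [Finset.sum_filter, Sg, Finset.sum_sigma]
      rw [Finset.sum_eq_single (L+1)]
      · rw [Finset.sum_product]
        apply Finset.sum_congr rfl
        intro i hi
        obtain ⟨hoddi, hlti⟩ := mem_hier (by omega) hi
        have hcongr : ∀ k ∈ Finset.range (p+2),
            (if Knot m ⟨L+1, (i, k)⟩ = (i₀:ℝ)/2^(L+1) then Coef p c ⟨L+1, (i, k)⟩ else 0)
            = (if k + i = i₀ + m then Coef p c ⟨L+1, (i, k)⟩ else 0) := by
          intro k _
          apply if_congr ?_ rfl rfl
          rw [hchar (L+1) le_rfl i k]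
          constructor
          · exact fun h => h.2
          · exact fun h => ⟨rfl, h⟩
        rw [Finset.sum_congr rfl hcongr]
        rcases le_or_gt i (i₀ + m) with hile | hile
        · rcases le_or_gt (i₀ + m - i) (p+1) with hkle | hkle
          · -- genuine term, k₀ = i₀ + m - i
            set k₀ := i₀ + m - i with hk₀
            have hcongr2 : ∀ k ∈ Finset.range (p+2),
                (if k + i = i₀ + m then Coef p c ⟨L+1, (i, k)⟩ else 0)
                = (if k = k₀ then Coef p c ⟨L+1, (i, k)⟩ else 0) := by
              intro k _
              apply if_congr ?_ rfl rfl
              omega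
            rw [Finset.sum_congr rfl hcongr2, Finset.sum_ite_eq' (Finset.range (p+2)) k₀]
            rw [if_pos (Finset.mem_range.mpr (by omega))]
            simp only [Coef]
            rw [cm, if_pos (by omega : (0:ℤ) ≤ (i₀:ℤ) + m - i)]
            have htoNat : ((i₀:ℤ) + m - i).toNat = k₀ := by omega
            rw [htoNat, hp2]
            have hsign : (-1:ℝ)^k₀ = (-1:ℝ)^m := by
              apply neg_one_pow_congr
              obtain ⟨b0, hb0⟩ := hodd₀
              obtain ⟨a0, ha0⟩ := hoddi
              omega
            rw [hsign]
            ring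
          · -- i₀ + m - i > p + 1 : all terms vanish, and cm = 0
            rw [Finset.sum_eq_zero, cm_gt (2*m) (by omega : ((2*m : ℕ):ℤ) < (i₀:ℤ) + m - i)]
            · ring
            · intro k hk
              rw [Finset.mem_range] at hk
              rw [if_neg (by omega)]
        · -- i > i₀ + m : no terms, cm = 0
          rw [Finset.sum_eq_zero, cm_neg (2*m) (by omega : (i₀:ℤ) + m - i < 0)]
          · ring
          · intro k hk
            rw [if_neg (by omega)]
      · intro l hl hlne
        rw [Finset.mem_range] at hl
        apply Finset.sum_eq_zero
        intro q hq
        rw [if_neg]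
        rw [hchar l (by omega) q.1 q.2]
        rintro ⟨h1, -⟩
        exact hlne h1
      · intro h
        exact absurd (Finset.mem_range.mpr (by omega)) h
    -- A at this knot vanishes
    have hknotmem : (i₀:ℝ)/2^(L+1) ∈ T := by
      rw [hT, Finset.mem_filter]
      constructor
      · apply Finset.mem_image.mpr
        refine ⟨⟨L+1, (i₀, m)⟩, ?_, ?_⟩
        · simp only [Sg, Finset.mem_sigma, Finset.mem_product, Finset.mem_range]
          exact ⟨by omega, hi₀, by omega⟩
        · simp only [Knot]
          push_cast
          ring
      · rw [div_lt_one (by positivity)]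
        exact_mod_cast hlt₀
    have hApos : (0:ℝ) < (i₀:ℝ)/2^(L+1) := by
      have hpos1 : 0 < i₀ := by
        obtain ⟨b, hb⟩ := hodd₀
        omega
      apply div_pos (by exact_mod_cast hpos1) (by positivity)
    have hAz := hAzero _ hknotmem hApos
    rw [hAval] at hAz
    -- factor out the nonzero constant
    have hconst : ((-1:ℝ)^m * ((2:ℝ)^(L+1))^p) ≠ 0 := by
      apply mul_ne_zero (pow_ne_zero m (by norm_num)) (pow_ne_zero p (by positivity))
    have hfact : ∑ i ∈ hierIndex (L+1), c (L+1) i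
        * ((-1:ℝ)^m * ((2:ℝ)^(L+1))^p * cm (2*m) ((i₀:ℤ) + m - i))
        = ((-1:ℝ)^m * ((2:ℝ)^(L+1))^p)
          * ∑ i ∈ hierIndex (L+1), c (L+1) i * cm (2*m) ((i₀:ℤ) + m - i) := by
      rw [Finset.mul_sum]
      apply Finset.sum_congr rfl
      intro i _
      ring
    rw [hfact] at hAz
    have heq : ∑ i ∈ hierIndex (L+1), c (L+1) i * cm (2*m) ((i₀:ℤ) + m - i) = 0 := by
      rcases mul_eq_zero.mp hAz with h | h
      · exact absurd h hconst
      · exact h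
    exact heq
  -- reindex and apply the Gram argument
  have himg : hierIndex (L+1) = (Finset.range (2^L)).image (fun a => 2*a+1) := by
    have h := hier_image (L+1) (by omega)
    rw [show L+1-1 = L from rfl] at h
    exact h
  have hv : ∀ b : ℕ, b < 2^L → ∑ a ∈ Finset.range (2^L),
      c (L+1) (2*a+1) * cm (2*m) ((m:ℤ) + 2*(b:ℤ) - 2*(a:ℤ)) = 0 := by
    intro b hb
    have hmem : (2*b+1) ∈ hierIndex (L+1) := by
      rw [himg]
      exact Finset.mem_image.mpr ⟨b, Finset.mem_range.mpr hb, rfl⟩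
    have h := heqs (2*b+1) hmem
    rw [himg, Finset.sum_image (by intro x _ y _ hxy; simp only at hxy; omega)] at h
    rw [← h]
    apply Finset.sum_congr rfl
    intro a _
    congr 1
    congr 1
    push_cast
    ring
  have hva := gram m (2^L) (fun a => c (L+1) (2*a+1)) hv
  intro i₀ hi₀
  rw [himg] at hi₀
  obtain ⟨a, ha, rfl⟩ := Finset.mem_image.mp hi₀
  exact hva a (Finset.mem_range.mp ha)

lemma main_ind (p m : ℕ) (hm : 1 ≤ m) (hp2 : p + 1 = 2*m) :
    ∀ L : ℕ, ∀ c : ℕ → ℕ → ℝ,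
    (∀ x ∈ Set.Ioo (0:ℝ) 1, ∑ l ∈ Finset.range (L+1), ∑ i ∈ hierIndex l,
       c l i * ((p.factorial:ℝ) * cardinalBSpline p ((2:ℝ)^l * x + ((p:ℝ)+1)/2 - i)) = 0)
    → ∀ l ≤ L, ∀ i ∈ hierIndex l, c l i = 0 := by
  have hmr : ((p:ℝ)+1)/2 = (m:ℝ) := by
    have : ((p:ℝ)+1) = 2*(m:ℝ) := by exact_mod_cast hp2
    rw [this]; ring
  intro L
  induction L with
  | zero =>
    intro c hyp l hl i hi
    interval_cases l
    apply level0 p m hm hp2 (c 0) ?_ i hi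
    intro x hx
    have h0 := hyp x hx
    rw [Finset.sum_range_one] at h0
    rw [← h0]
    apply Finset.sum_congr rfl
    intro j _
    congr 1
    rw [show (2:ℝ)^0 * x + ((p:ℝ)+1)/2 - (j:ℝ) = x + (m:ℝ) - j by
      rw [pow_zero, one_mul, hmr]]
    exact (bspline_rep p (by omega) (x + (m:ℝ) - j)).symm
  | succ L ih =>
    intro c hyp l hl i hi
    have htop := step_top p m hm hp2 L c hyp
    have hyp' : ∀ x ∈ Set.Ioo (0:ℝ) 1, ∑ l ∈ Finset.range (L+1), ∑ i ∈ hierIndex l,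
        c l i * ((p.factorial:ℝ) * cardinalBSpline p ((2:ℝ)^l * x + ((p:ℝ)+1)/2 - i)) = 0 := by
      intro x hx
      have h0 := hyp x hx
      rw [Finset.sum_range_succ] at h0
      have hz : ∑ i ∈ hierIndex (L+1), c (L+1) i
          * ((p.factorial:ℝ) * cardinalBSpline p ((2:ℝ)^(L+1) * x + ((p:ℝ)+1)/2 - i)) = 0 :=
        Finset.sum_eq_zero (fun j hj => by rw [htop j hj, zero_mul])
      rw [hz, add_zero] at h0
      exact h0
    rcases Nat.lt_or_ge l (L+1) with hlt | hge
    · exact ih c hyp' l (by omega) i hi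
    · have : l = L + 1 := by omega
      subst this
      exact htop i hi


end HB

/-- **Proposition 3.5 (hierarchical B-splines are linearly independent).** -/
theorem hier_bsplines_linear_independent (p : ℕ) (hp : Odd p) (ℓ : ℕ) :
    LinearIndependent ℝ
      (fun q : {q : ℕ × ℕ // q.1 ≤ ℓ ∧ q.2 ∈ hierIndex q.1} =>
        hierBSpline p q.1.1 q.1.2) := by
  classical
  obtain ⟨t, ht⟩ := hp
  rw [linearIndependent_iff']
  intro s g hrel q₀ hq₀
  set c : ℕ → ℕ → ℝ := fun l i =>
    ∑ q ∈ s.filter (fun q => q.1.1 = l ∧ q.1.2 = i), g q with hc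
  have hyp : ∀ x ∈ Set.Ioo (0:ℝ) 1, ∑ l ∈ Finset.range (ℓ+1), ∑ i ∈ hierIndex l,
      c l i * ((p.factorial:ℝ) * cardinalBSpline p ((2:ℝ)^l * x + ((p:ℝ)+1)/2 - i)) = 0 := by
    intro x hx
    have hxIcc : x ∈ Set.Icc (0:ℝ) 1 := ⟨hx.1.le, hx.2.le⟩
    have heval := congrFun hrel ⟨x, hxIcc⟩
    rw [Finset.sum_apply] at heval
    simp only [Pi.smul_apply, smul_eq_mul, Pi.zero_apply] at heval
    -- rewrite double sum as the sum over s
    have hdouble : ∑ l ∈ Finset.range (ℓ+1), ∑ i ∈ hierIndex l,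
        c l i * cardinalBSpline p ((2:ℝ)^l * x + ((p:ℝ)+1)/2 - i)
        = ∑ q ∈ s, g q * hierBSpline p q.1.1 q.1.2 ⟨x, hxIcc⟩ := by
      rw [← Finset.sum_sigma (Finset.range (ℓ+1)) (fun l => hierIndex l)
        (fun e => c e.1 e.2 * cardinalBSpline p ((2:ℝ)^e.1 * x + ((p:ℝ)+1)/2 - e.2))]
      rw [← Finset.sum_fiberwise_of_maps_to
        (g := fun q : {q : ℕ × ℕ // q.1 ≤ ℓ ∧ q.2 ∈ hierIndex q.1} =>
          (⟨q.1.1, q.1.2⟩ : Σ _ : ℕ, ℕ))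
        (t := (Finset.range (ℓ+1)).sigma (fun l => hierIndex l)) ?_
        (fun q => g q * hierBSpline p q.1.1 q.1.2 ⟨x, hxIcc⟩)]
      · apply Finset.sum_congr rfl
        intro e he
        rw [Finset.mem_sigma] at he
        have hfil : s.filter (fun q => (⟨q.1.1, q.1.2⟩ : Σ _ : ℕ, ℕ) = e)
            = s.filter (fun q => q.1.1 = e.1 ∧ q.1.2 = e.2) := by
          apply Finset.filter_congr
          intro q _
          constructor
          · intro h
            rw [← h]
            exact ⟨rfl, rfl⟩
          · intro h
            obtain ⟨h1, h2⟩ := h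
            cases e
            simp only [Sigma.mk.inj_iff, heq_eq_eq]
            exact ⟨h1, h2⟩
        rw [hfil, hc, Finset.sum_mul]
        apply Finset.sum_congr rfl
        intro q hq
        rw [Finset.mem_filter] at hq
        obtain ⟨-, h1, h2⟩ := hq
        rw [h1, h2]
        rfl
      · intro q hq
        rw [Finset.mem_sigma]
        exact ⟨Finset.mem_range.mpr (Nat.lt_succ_of_le q.2.1), q.2.2⟩
    have hfac : ∑ l ∈ Finset.range (ℓ+1), ∑ i ∈ hierIndex l,
        c l i * ((p.factorial:ℝ) * cardinalBSpline p ((2:ℝ)^l * x + ((p:ℝ)+1)/2 - i))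
        = (p.factorial:ℝ) * ∑ l ∈ Finset.range (ℓ+1), ∑ i ∈ hierIndex l,
          c l i * cardinalBSpline p ((2:ℝ)^l * x + ((p:ℝ)+1)/2 - i) := by
      rw [Finset.mul_sum]
      apply Finset.sum_congr rfl
      intro l _
      rw [Finset.mul_sum]
      apply Finset.sum_congr rfl
      intro i _
      ring
    rw [hfac, hdouble, heval, mul_zero]
  have hzero := HB.main_ind p (t+1) (by omega) (by omega) ℓ c hyp
  have hq0z := hzero q₀.1.1 q₀.2.1 q₀.1.2 q₀.2.2
  have hq0z' : ∑ q ∈ s.filter (fun q => q.1.1 = q₀.1.1 ∧ q.1.2 = q₀.1.2), g q = 0 := hq0z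
  rw [Finset.sum_eq_single q₀] at hq0z'
  · exact hq0z'
  · intro q hq hne
    exfalso
    rw [Finset.mem_filter] at hq
    apply hne
    apply Subtype.ext
    apply Prod.ext
    · exact hq.2.1
    · exact hq.2.2
  · intro h
    exact absurd (Finset.mem_filter.mpr ⟨hq₀, rfl, rfl⟩) h
end

section
/- Let L₀ ⊆ L be an equivalence class of the relation ∼, and let T_{L₀} := {t ∈ {1,…,d} : there exists ℓ*_t < ℓ_t such that ℓ'_t = ℓ*_t for all ℓ' ∈ L₀}. Then L₀ = {ℓ' ∈ L : ℓ'_t = ℓ*_t for all t ∈ T_{L₀}, and ℓ'_t ≥ ℓ_t for all t ∉ T_{L₀}}. (Lemma 4.7, characterization of equivalence classes.) -/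
/-- The set `L` of levels whose full grids do not contain `x_{ℓ,i}`. -/
def Lset (d n : ℕ) (ℓ : Fin d → ℕ) : Set (Fin d → ℕ) :=
  {ℓ' | (∃ q < d, (∑ t, (ℓ' t : ℤ)) = (n : ℤ) - q) ∧ ∃ t, ℓ' t < ℓ t}

/-- The relation `∼`: `ℓ' ∼ ℓ''` iff `min(ℓ'_t, ℓ''_t) ≥ ℓ_t` for every `t` outside
`T_{ℓ',ℓ''} = {t : ℓ'_t = ℓ''_t < ℓ_t}`. -/
def simRel (d : ℕ) (ℓ ℓ' ℓ'' : Fin d → ℕ) : Prop :=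
  ∀ t, ¬(ℓ' t = ℓ'' t ∧ ℓ' t < ℓ t) → ℓ t ≤ min (ℓ' t) (ℓ'' t)

/-- The equivalence class of `ℓ₀` with respect to `∼` inside `L`. -/
def classOf (d n : ℕ) (ℓ ℓ₀ : Fin d → ℕ) : Set (Fin d → ℕ) :=
  {μ | μ ∈ Lset d n ℓ ∧ simRel d ℓ μ ℓ₀}

/-- `T_{L₀}`: the set of dimensions in which all levels of the class share a common
value `< ℓ_t`. -/
def Tset (d n : ℕ) (ℓ ℓ₀ : Fin d → ℕ) : Set (Fin d) :=
  {t | ∃ v < ℓ t, ∀ μ ∈ classOf d n ℓ ℓ₀, μ t = v}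

/-- **Lemma 4.7 (characterization of equivalence classes).** -/
theorem equivalence_class_characterization
    (d n : ℕ) (hd : 1 ≤ d) (ℓ : Fin d → ℕ) (hℓ : (∑ t, ℓ t) ≤ n)
    (ℓ₀ : Fin d → ℕ) (hℓ₀ : ℓ₀ ∈ Lset d n ℓ) :
    classOf d n ℓ ℓ₀ =
      {ℓ' | ℓ' ∈ Lset d n ℓ
        ∧ (∀ t ∈ Tset d n ℓ ℓ₀, ∀ μ ∈ classOf d n ℓ ℓ₀, ℓ' t = μ t)
        ∧ ∀ t ∉ Tset d n ℓ ℓ₀, ℓ t ≤ ℓ' t} := by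
  have hrefl : ℓ₀ ∈ classOf d n ℓ ℓ₀ := by
    refine ⟨hℓ₀, fun t ht => ?_⟩
    have h := Nat.le_of_not_lt (fun h => ht ⟨rfl, h⟩)
    simpa using h
  have dich : ∀ ν ∈ classOf d n ℓ ℓ₀, ∀ t,
      (ν t = ℓ₀ t ∧ ν t < ℓ t) ∨ (ℓ t ≤ ν t ∧ ℓ t ≤ ℓ₀ t) := by
    intro ν hν t
    by_cases h : ν t = ℓ₀ t ∧ ν t < ℓ t
    · exact Or.inl h
    · have := hν.2 t h
      exact Or.inr ⟨le_trans this (min_le_left _ _), le_trans this (min_le_right _ _)⟩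
  have hT : ∀ t, ℓ₀ t < ℓ t → t ∈ Tset d n ℓ ℓ₀ := by
    intro t ht
    refine ⟨ℓ₀ t, ht, fun ν hν => ?_⟩
    rcases dich ν hν t with ⟨h1, _⟩ | ⟨_, h2⟩
    · exact h1
    · exact absurd ht (not_lt.2 h2)
  ext μ
  constructor
  · intro hμ
    refine ⟨hμ.1, ?_, ?_⟩
    · intro t ht ν hν
      obtain ⟨v, _, hall⟩ := ht
      rw [hall μ hμ, hall ν hν]
    · intro t ht
      by_contra h
      push_neg at h
      rcases dich μ hμ t with ⟨h1, h2⟩ | ⟨h2, _⟩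
      · exact ht (hT t (h1 ▸ h2))
      · exact absurd h (not_lt.2 h2)
  · rintro ⟨h1, h2, h3⟩
    refine ⟨h1, fun t ht => ?_⟩
    by_cases hmem : t ∈ Tset d n ℓ ℓ₀
    · have e1 : μ t = ℓ₀ t := h2 t hmem ℓ₀ hrefl
      obtain ⟨v, hv, hall⟩ := hmem
      have e2 : ℓ₀ t = v := hall ℓ₀ hrefl
      exact absurd ⟨e1, by rw [e1, e2]; exact hv⟩ ht
    · have hℓ₀t : ℓ t ≤ ℓ₀ t := le_of_not_gt fun h => hmem (hT t h)
      exact le_min (h3 t hmem) hℓ₀t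
end

section
/- The relation ∼ is an equivalence relation on L: it is reflexive (ℓ' ∼ ℓ' for every ℓ' ∈ L), symmetric (ℓ' ∼ ℓ'' implies ℓ'' ∼ ℓ' for ℓ',ℓ'' ∈ L), and transitive (ℓ' ∼ ℓ̂ and ℓ̂ ∼ ℓ'' imply ℓ' ∼ ℓ'' for ℓ',ℓ̂,ℓ'' ∈ L). (Lemma A.3.) -/
/-- **Lemma A.3.** The relation `∼` is an equivalence relation on `L`. -/
theorem simRel_equivalence
    (d n : ℕ) (hd : 1 ≤ d) (ℓ : Fin d → ℕ) (hℓ : (∑ t, ℓ t) ≤ n) :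
    (∀ ℓ' ∈ Lset d n ℓ, simRel d ℓ ℓ' ℓ')
    ∧ (∀ ℓ' ∈ Lset d n ℓ, ∀ ℓ'' ∈ Lset d n ℓ,
        simRel d ℓ ℓ' ℓ'' → simRel d ℓ ℓ'' ℓ')
    ∧ (∀ ℓ' ∈ Lset d n ℓ, ∀ ℓh ∈ Lset d n ℓ, ∀ ℓ'' ∈ Lset d n ℓ,
        simRel d ℓ ℓ' ℓh → simRel d ℓ ℓh ℓ'' → simRel d ℓ ℓ' ℓ'') := by
  refine ⟨?_, ?_, ?_⟩
  · intro ℓ' _ t ht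
    simp only [le_min_iff]
    constructor <;> by_contra h <;> exact ht ⟨rfl, by omega⟩
  · intro ℓ' _ ℓ'' _ h t ht
    have := h t (fun hc => ht ⟨hc.1.symm, hc.1 ▸ hc.2⟩)
    simp only [le_min_iff] at this ⊢
    omega
  · intro ℓ' _ ℓh _ ℓ'' _ h1 h2 t ht
    by_cases c1 : ℓ' t = ℓh t ∧ ℓ' t < ℓ t
    · by_cases c2 : ℓh t = ℓ'' t ∧ ℓh t < ℓ t
      · exact absurd ⟨c1.1.trans c2.1, c1.2⟩ ht
      · have := h2 t c2
        simp only [le_min_iff] at this ⊢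
        omega
    · have h1' := h1 t c1
      simp only [le_min_iff] at h1'
      have h2' := h2 t (by simp only [not_and]; omega)
      simp only [le_min_iff] at h2' ⊢
      omega
end
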